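/- arXiv:2102.10277 — 6 statements merged into one kernel-verified Lean document; each statement's English description precedes it below -/
import Mathlib

section
/- Let n, a, b, t be positive integers and let F be an a-uniform family and G a b-uniform family of subsets of [n] such that F and G are cross-t-intersecting. Then there exist an a-uniform family F* with |F*| = |F| and a b-uniform family G* with |G*| = |G| such that for every F ∈ F* and every G ∈ G* there exists s ∈ [n] with |F ∩ [s]| + |G ∩ [s]| ≥ s + t. -/
open Finset

/-- The ground set `[n] = {1,…,n}`. -/
def gs (n : ℕ) : Finset ℕ := Finset.Icc 1 n

/-- `F` is an `m`-uniform family of subsets of `[n]`. -/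
def UniformOn (n m : ℕ) (F : Finset (Finset ℕ)) : Prop :=
  ∀ A ∈ F, A ⊆ gs n ∧ A.card = m

/-- `F` and `G` are cross-`t`-intersecting. -/
def CrossInt (t : ℕ) (F G : Finset (Finset ℕ)) : Prop :=
  ∀ A ∈ F, ∀ B ∈ G, t ≤ (A ∩ B).card

def cswp (i j : ℕ) (A : Finset ℕ) : Finset ℕ :=
  if j ∈ A ∧ i ∉ A then insert i (A.erase j) else A

/-- Family compression. -/
def cf (i j : ℕ) (F : Finset (Finset ℕ)) : Finset (Finset ℕ) :=
  F.image fun A => if cswp i j A ∈ F then A else cswp i j A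

/-- Closure of a family under left shifts inside `[n]`. -/
def Compressed (n : ℕ) (G : Finset (Finset ℕ)) : Prop :=
  ∀ i j : ℕ, i ∈ gs n → j ∈ gs n → i < j → ∀ B ∈ G, j ∈ B → i ∉ B →
    insert i (B.erase j) ∈ G

/-- Total weight of a family. -/
def W (F : Finset (Finset ℕ)) : ℕ := ∑ A ∈ F, ∑ x ∈ A, x

lemma hrec (i j : ℕ) (A : Finset ℕ) (hjA : j ∈ A) (hiA : i ∉ A) :
    insert j ((insert i (A.erase j)).erase i) = A := by
  rw [Finset.erase_insert (by simp [hiA]), Finset.insert_erase hjA]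

lemma f_cases (i j : ℕ) (hij : i < j) (F : Finset (Finset ℕ)) (A : Finset ℕ) :
    (if cswp i j A ∈ F then A else cswp i j A) = A ∨
    (j ∈ A ∧ i ∉ A ∧ cswp i j A ∉ F ∧
      (if cswp i j A ∈ F then A else cswp i j A) = insert i (A.erase j)) := by
  by_cases h1 : j ∈ A ∧ i ∉ A
  · by_cases h2 : cswp i j A ∈ F
    · left; simp [h2]
    · right
      refine ⟨h1.1, h1.2, h2, ?_⟩
      rw [if_neg h2]
      simp [cswp, h1]
  · left
    have : cswp i j A = A := by simp [cswp, h1]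
    split <;> simp [this]

lemma cf_injOn (i j : ℕ) (hij : i < j) (F : Finset (Finset ℕ)) :
    ∀ A₁ ∈ F, ∀ A₂ ∈ F,
      (if cswp i j A₁ ∈ F then A₁ else cswp i j A₁) =
      (if cswp i j A₂ ∈ F then A₂ else cswp i j A₂) → A₁ = A₂ := by
  intro A₁ h₁ A₂ h₂ heq
  rcases f_cases i j hij F A₁ with e₁ | ⟨hj₁, hi₁, hc₁, e₁⟩ <;>
    rcases f_cases i j hij F A₂ with e₂ | ⟨hj₂, hi₂, hc₂, e₂⟩
  · rw [e₁, e₂] at heq; exact heq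
  · rw [e₁, e₂] at heq
    exfalso
    have : cswp i j A₂ ∈ F := by
      have : cswp i j A₂ = A₁ := by
        simp [cswp, hj₂, hi₂, ← heq]
      rw [this]; exact h₁
    exact hc₂ this
  · rw [e₁, e₂] at heq
    exfalso
    have : cswp i j A₁ ∈ F := by
      have : cswp i j A₁ = A₂ := by
        simp [cswp, hj₁, hi₁, heq]
      rw [this]; exact h₂
    exact hc₁ this
  · rw [e₁, e₂] at heq
    calc A₁ = insert j ((insert i (A₁.erase j)).erase i) := (hrec i j A₁ hj₁ hi₁).symm
    _ = insert j ((insert i (A₂.erase j)).erase i) := by rw [heq]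
    _ = A₂ := hrec i j A₂ hj₂ hi₂

lemma cf_card (i j : ℕ) (hij : i < j) (F : Finset (Finset ℕ)) :
    (cf i j F).card = F.card :=
  Finset.card_image_of_injOn fun A₁ h₁ A₂ h₂ heq =>
    cf_injOn i j hij F A₁ h₁ A₂ h₂ heq

lemma cf_mem_cases (i j : ℕ) (hij : i < j) (F : Finset (Finset ℕ)) (A' : Finset ℕ)
    (h : A' ∈ cf i j F) :
    A' ∈ F ∨ (∃ A ∈ F, j ∈ A ∧ i ∉ A ∧ i ∈ A' ∧ j ∉ A' ∧ A' = insert i (A.erase j)) := by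
  obtain ⟨A, hA, hA'⟩ := Finset.mem_image.mp h
  rcases f_cases i j hij F A with e | ⟨hjA, hiA, hcA, e⟩
  · left; rw [← hA', e]; exact hA
  · right
    refine ⟨A, hA, hjA, hiA, ?_, ?_, ?_⟩
    · rw [← hA', e]; exact Finset.mem_insert_self _ _
    · rw [← hA', e]
      simp [Finset.mem_insert, Nat.ne_of_gt hij]
    · rw [← hA', e]

lemma cf_closed (i j : ℕ) (hij : i < j) (F : Finset (Finset ℕ)) (A' : Finset ℕ)
    (h : A' ∈ cf i j F) (hj : j ∈ A') (hi : i ∉ A') :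
    A' ∈ F ∧ insert i (A'.erase j) ∈ F := by
  obtain ⟨A, hA, hA'⟩ := Finset.mem_image.mp h
  rcases f_cases i j hij F A with e | ⟨hjA, hiA, hcA, e⟩
  · rw [e] at hA'
    subst hA'
    refine ⟨hA, ?_⟩
    by_contra hne
    have hc : cswp i j A = insert i (A.erase j) := by simp [cswp, hj, hi]
    rw [hc, if_neg hne] at e
    exact hi (e ▸ Finset.mem_insert_self i _)
  · rw [e] at hA'
    exact absurd (hA' ▸ Finset.mem_insert_self i _) hi


lemma card_le_erase_add_one (j : ℕ) (S : Finset ℕ) : S.card ≤ (S.erase j).card + 1 := by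
  by_cases hj : j ∈ S
  · rw [Finset.card_erase_of_mem hj]
    have := Finset.card_pos.mpr ⟨j, hj⟩
    omega
  · rw [Finset.erase_eq_of_notMem hj]; omega

lemma inter_ie_le (i j : ℕ) (A B : Finset ℕ) (hjB : j ∈ B) (hiB : i ∉ B) :
    (A ∩ B).card ≤ (A ∩ insert i (B.erase j)).card + 1 := by
  have hsub : (A ∩ B).erase j ⊆ A ∩ insert i (B.erase j) := by
    intro z hz
    simp only [Finset.mem_erase, Finset.mem_inter, Finset.mem_insert] at *
    tauto
  have h1 := Finset.card_le_card hsub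
  have h2 := card_le_erase_add_one j (A ∩ B)
  omega

lemma inter_ie_le' (i j : ℕ) (A B : Finset ℕ) (h : i ∈ A ∨ j ∉ A) (hjB : j ∈ B) (hiB : i ∉ B) :
    (A ∩ B).card ≤ (A ∩ insert i (B.erase j)).card := by
  rcases h with hiA | hjA
  · have hsub : insert i ((A ∩ B).erase j) ⊆ A ∩ insert i (B.erase j) := by
      intro z hz
      simp only [Finset.mem_insert, Finset.mem_erase, Finset.mem_inter] at *
      rcases hz with rfl | hz
      · exact ⟨hiA, Or.inl rfl⟩
      · tauto
    have h1 := Finset.card_le_card hsub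
    rw [Finset.card_insert_of_notMem (by simp only [Finset.mem_erase, Finset.mem_inter]; tauto)] at h1
    have h2 := card_le_erase_add_one j (A ∩ B)
    omega
  · have hsub : A ∩ B ⊆ A ∩ insert i (B.erase j) := by
      intro z hz
      simp only [Finset.mem_inter, Finset.mem_insert, Finset.mem_erase] at *
      have : z ≠ j := fun h => hjA (h ▸ hz.1)
      tauto
    exact Finset.card_le_card hsub

lemma inter_double (i j : ℕ) (A B : Finset ℕ) (hjA : j ∈ A) (hiA : i ∉ A) (hjB : j ∈ B) (hiB : i ∉ B) :
    (A ∩ B).card ≤ (insert i (A.erase j) ∩ insert i (B.erase j)).card := by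
  have hsub : insert i ((A ∩ B).erase j) ⊆ insert i (A.erase j) ∩ insert i (B.erase j) := by
    intro z hz
    simp only [Finset.mem_insert, Finset.mem_erase, Finset.mem_inter] at *
    tauto
  have h1 := Finset.card_le_card hsub
  rw [Finset.card_insert_of_notMem (by simp only [Finset.mem_erase, Finset.mem_inter]; tauto)] at h1
  rw [Finset.card_erase_of_mem (Finset.mem_inter.mpr ⟨hjA, hjB⟩)] at h1
  have := Finset.card_pos.mpr ⟨j, Finset.mem_inter.mpr ⟨hjA, hjB⟩⟩
  omega

lemma inter_ie_eq (i j : ℕ) (A B : Finset ℕ) (hiB : i ∉ B) :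
    insert i (A.erase j) ∩ B = (A ∩ B).erase j := by
  ext z
  simp only [Finset.mem_insert, Finset.mem_erase, Finset.mem_inter]
  constructor
  · rintro ⟨rfl | ⟨hzj, hzA⟩, hzB⟩
    · exact absurd hzB hiB
    · exact ⟨hzj, hzA, hzB⟩
  · rintro ⟨hzj, hzA, hzB⟩
    exact ⟨Or.inr ⟨hzj, hzA⟩, hzB⟩


lemma cross_cf (i j : ℕ) (hij : i < j) (t : ℕ) (F G : Finset (Finset ℕ))
    (h : CrossInt t F G) : CrossInt t (cf i j F) (cf i j G) := by
  intro A' hA' B' hB'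
  rcases cf_mem_cases i j hij F A' hA' with hAF | ⟨A, hA, hjA, hiA, hiA', hjA', hAeq⟩
  · rcases cf_mem_cases i j hij G B' hB' with hBG | ⟨B, hB, hjB, hiB, hiB', hjB', hBeq⟩
    · exact h A' hAF B' hBG
    · subst hBeq
      have htAB := h A' hAF B hB
      by_cases hiA' : i ∈ A'
      · exact le_trans htAB (inter_ie_le' i j A' B (Or.inl hiA') hjB hiB)
      · by_cases hjA'' : j ∈ A'
        · obtain ⟨_, hA''⟩ := cf_closed i j hij F A' hA' hjA'' hiA'
          have ht2 := h _ hA'' B hB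
          rw [inter_ie_eq i j A' B hiB,
            Finset.card_erase_of_mem (Finset.mem_inter.mpr ⟨hjA'', hjB⟩)] at ht2
          have h3 := inter_ie_le i j A' B hjB hiB
          have h4 := Finset.card_pos.mpr ⟨j, Finset.mem_inter.mpr ⟨hjA'', hjB⟩⟩
          omega
        · exact le_trans htAB (inter_ie_le' i j A' B (Or.inr hjA'') hjB hiB)
  · subst hAeq
    rcases cf_mem_cases i j hij G B' hB' with hBG | ⟨B, hB, hjB, hiB, hiB', hjB', hBeq⟩
    · have htAB := h A hA B' hBG
      rw [Finset.inter_comm] at htAB ⊢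
      by_cases hiB'' : i ∈ B'
      · exact le_trans htAB (inter_ie_le' i j B' A (Or.inl hiB'') hjA hiA)
      · by_cases hjB'' : j ∈ B'
        · obtain ⟨_, hB''⟩ := cf_closed i j hij G B' hB' hjB'' hiB''
          have ht2 := h A hA _ hB''
          rw [Finset.inter_comm, inter_ie_eq i j B' A hiA,
            Finset.card_erase_of_mem (Finset.mem_inter.mpr ⟨hjB'', hjA⟩)] at ht2
          have h3 := inter_ie_le i j B' A hjA hiA
          have h4 := Finset.card_pos.mpr ⟨j, Finset.mem_inter.mpr ⟨hjB'', hjA⟩⟩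
          omega
        · exact le_trans htAB (inter_ie_le' i j B' A (Or.inr hjB'') hjA hiA)
    · subst hBeq
      exact le_trans (h A hA B hB) (inter_double i j A B hjA hiA hjB hiB)

lemma uniform_cf (n m i j : ℕ) (hij : i < j) (hi : i ∈ gs n) (F : Finset (Finset ℕ))
    (hU : UniformOn n m F) : UniformOn n m (cf i j F) := by
  intro A' hA'
  rcases cf_mem_cases i j hij F A' hA' with hAF | ⟨A, hA, hjA, hiA, _, _, hAeq⟩
  · exact hU A' hAF
  · obtain ⟨hsub, hcard⟩ := hU A hA
    subst hAeq
    constructor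
    · exact Finset.insert_subset hi ((Finset.erase_subset _ _).trans hsub)
    · rw [Finset.card_insert_of_notMem (fun hmem => hiA (Finset.mem_of_mem_erase hmem)),
        Finset.card_erase_of_mem hjA]
      have := Finset.card_pos.mpr ⟨j, hjA⟩
      omega

lemma W_cf_le (i j : ℕ) (hij : i < j) (F : Finset (Finset ℕ)) :
    W (cf i j F) ≤ W F ∧ (cf i j F ≠ F → W (cf i j F) < W F) := by
  classical
  have hsum : W (cf i j F) = ∑ A ∈ F, ∑ x ∈ (if cswp i j A ∈ F then A else cswp i j A), x := by
    unfold W cf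
    exact Finset.sum_image (cf_injOn i j hij F)
  have hle : ∀ A ∈ F, ∑ x ∈ (if cswp i j A ∈ F then A else cswp i j A), x ≤ ∑ x ∈ A, x := by
    intro A hA
    rcases f_cases i j hij F A with e | ⟨hjA, hiA, _, e⟩
    · rw [e]
    · rw [e, Finset.sum_insert (fun hmem => hiA (Finset.mem_of_mem_erase hmem))]
      have h2 : ∑ x ∈ A.erase j, x + j = ∑ x ∈ A, x := Finset.sum_erase_add A _ hjA
      omega
  constructor
  · rw [hsum]
    unfold W
    exact Finset.sum_le_sum hle
  · intro hne
    have hex : ∃ A ∈ F, (if cswp i j A ∈ F then A else cswp i j A) ≠ A := by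
      by_contra hc
      push_neg at hc
      apply hne
      unfold cf
      rw [Finset.image_congr (fun A hA => hc A hA), Finset.image_id']
    obtain ⟨A₀, hA₀, hA₀ne⟩ := hex
    rw [hsum]
    unfold W
    apply Finset.sum_lt_sum hle
    refine ⟨A₀, hA₀, ?_⟩
    rcases f_cases i j hij F A₀ with e | ⟨hjA, hiA, _, e⟩
    · exact absurd e hA₀ne
    · rw [e, Finset.sum_insert (fun hmem => hiA (Finset.mem_of_mem_erase hmem))]
      have h2 : ∑ x ∈ A₀.erase j, x + j = ∑ x ∈ A₀, x := Finset.sum_erase_add A₀ _ hjA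
      omega
lemma exists_nth (S : Finset ℕ) (t : ℕ) (ht : 0 < t) (h : t ≤ S.card) :
    ∃ x ∈ S, (S.filter (· < x)).card = t - 1 := by
  classical
  have hne : S.Nonempty := Finset.card_pos.mp (lt_of_lt_of_le ht h)
  set T : Finset ℕ := S.filter (fun x => t - 1 ≤ (S.filter (· < x)).card) with hT
  have hTne : T.Nonempty := by
    refine ⟨S.max' hne, Finset.mem_filter.mpr ⟨S.max'_mem hne, ?_⟩⟩
    have heq : S.filter (· < S.max' hne) = S.erase (S.max' hne) := by
      ext z
      simp only [Finset.mem_filter, Finset.mem_erase]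
      constructor
      · rintro ⟨hz, hlt⟩; exact ⟨Nat.ne_of_lt hlt, hz⟩
      · rintro ⟨hne', hz⟩
        exact ⟨hz, lt_of_le_of_ne (S.le_max' z hz) hne'⟩
    rw [heq, Finset.card_erase_of_mem (S.max'_mem hne)]
    omega
  set x := T.min' hTne with hx
  have hxT : x ∈ T := T.min'_mem hTne
  have hxS : x ∈ S := (Finset.mem_filter.mp hxT).1
  have hxc : t - 1 ≤ (S.filter (· < x)).card := (Finset.mem_filter.mp hxT).2
  refine ⟨x, hxS, ?_⟩
  by_contra hne'
  have hlt : t - 1 < (S.filter (· < x)).card := lt_of_le_of_ne hxc (Ne.symm hne')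
  have hfne : (S.filter (· < x)).Nonempty := Finset.card_pos.mp (by omega)
  set y := (S.filter (· < x)).max' hfne with hy
  have hyS : y ∈ S := (Finset.mem_filter.mp ((S.filter (· < x)).max'_mem hfne)).1
  have hyx : y < x := (Finset.mem_filter.mp ((S.filter (· < x)).max'_mem hfne)).2
  have heq : S.filter (· < y) = (S.filter (· < x)).erase y := by
    ext z
    simp only [Finset.mem_filter, Finset.mem_erase]
    constructor
    · rintro ⟨hz, hlt'⟩
      exact ⟨Nat.ne_of_lt hlt', hz, lt_trans hlt' hyx⟩
    · rintro ⟨hne'', hz, hlt'⟩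
      exact ⟨hz, lt_of_le_of_ne ((S.filter (· < x)).le_max' z (Finset.mem_filter.mpr ⟨hz, hlt'⟩)) hne''⟩
  have hyT : y ∈ T := by
    refine Finset.mem_filter.mpr ⟨hyS, ?_⟩
    rw [heq, Finset.card_erase_of_mem ((S.filter (· < x)).max'_mem hfne)]
    omega
  have := T.min'_le y hyT
  omega
lemma mem_gs {z m : ℕ} : z ∈ gs m ↔ 1 ≤ z ∧ z ≤ m := by simp [gs]

lemma card_gs (m : ℕ) : (gs m).card = m := by simp [gs]

lemma count_id (A B : Finset ℕ) (s : ℕ) :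
    ((A ∪ B) ∩ gs s).card + ((A ∩ B) ∩ gs s).card = (A ∩ gs s).card + (B ∩ gs s).card := by
  have h1 : (A ∪ B) ∩ gs s = (A ∩ gs s) ∪ (B ∩ gs s) := by
    ext z
    simp only [Finset.mem_inter, Finset.mem_union]
    tauto
  have h2 : (A ∩ B) ∩ gs s = (A ∩ gs s) ∩ (B ∩ gs s) := by
    ext z
    simp only [Finset.mem_inter]
    tauto
  rw [h1, h2]
  exact Finset.card_union_add_card_inter _ _

lemma key (n t : ℕ) (ht : 0 < t) (G : Finset (Finset ℕ)) (hcomp : Compressed n G)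
    (A : Finset ℕ) :
    ∀ m (B : Finset ℕ), B ∈ G → B ⊆ gs n → (A ∩ B).card ≤ m → t ≤ (A ∩ B).card →
    (∀ s ∈ gs n, (A ∩ gs s).card + (B ∩ gs s).card + 1 ≤ s + t) →
    ∃ B' ∈ G, (A ∩ B').card < t := by
  intro m
  induction m with
  | zero => intro B _ _ hm htc _; omega
  | succ m ih =>
    intro B hBG hBsub hm htc hinv
    set S := A ∩ B with hS
    obtain ⟨x, hxS, hxfilt⟩ := exists_nth S t ht htc
    have hxB : x ∈ B := (Finset.mem_inter.mp hxS).2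
    have hxA : x ∈ A := (Finset.mem_inter.mp hxS).1
    have hxgs : x ∈ gs n := hBsub hxB
    have hx1 : 1 ≤ x := (mem_gs.mp hxgs).1
    have hxn : x ≤ n := (mem_gs.mp hxgs).2
    -- at least t elements of S lie in [x]
    have hSx : t ≤ (S ∩ gs x).card := by
      have hsub : insert x (S.filter (· < x)) ⊆ S ∩ gs x := by
        intro z hz
        rcases Finset.mem_insert.mp hz with rfl | hz
        · exact Finset.mem_inter.mpr ⟨hxS, mem_gs.mpr ⟨hx1, le_refl _⟩⟩
        · have hzS := (Finset.mem_filter.mp hz).1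
          have hzx := (Finset.mem_filter.mp hz).2
          have hz1 : 1 ≤ z := (mem_gs.mp (hBsub (Finset.mem_inter.mp hzS).2)).1
          exact Finset.mem_inter.mpr ⟨hzS, mem_gs.mpr ⟨hz1, le_of_lt hzx⟩⟩
      have hcardins : (insert x (S.filter (· < x))).card = t := by
        rw [Finset.card_insert_of_notMem (by simp)]
        omega
      have := Finset.card_le_card hsub
      omega
    have hinvx := hinv x hxgs
    have hid := count_id A B x
    rw [← hS] at hid
    have hu : ((A ∪ B) ∩ gs x).card + 1 ≤ x := by omega
    -- a free element e < x
    have hE : (gs x \ (A ∪ B)).Nonempty := by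
      apply Finset.card_pos.mp
      have h1 := Finset.card_sdiff_add_card_inter (gs x) (A ∪ B)
      have h2 : (gs x ∩ (A ∪ B)).card = ((A ∪ B) ∩ gs x).card := by rw [Finset.inter_comm]
      have h3 := card_gs x
      omega
    obtain ⟨e, he⟩ := hE
    have heg : e ∈ gs x := (Finset.mem_sdiff.mp he).1
    have heAB : e ∉ A ∪ B := (Finset.mem_sdiff.mp he).2
    have heA : e ∉ A := fun hh => heAB (Finset.mem_union_left _ hh)
    have heB : e ∉ B := fun hh => heAB (Finset.mem_union_right _ hh)
    have he1 : 1 ≤ e := (mem_gs.mp heg).1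
    have hex : e ≤ x := (mem_gs.mp heg).2
    have hex' : e < x :=
      lt_of_le_of_ne hex (fun hh => heAB (hh ▸ Finset.mem_union_left _ hxA))
    have hegs : e ∈ gs n := mem_gs.mpr ⟨he1, le_trans hex hxn⟩
    set B₁ := insert e (B.erase x) with hB₁
    have hB₁G : B₁ ∈ G := hcomp e x hegs hxgs hex' B hBG hxB heB
    have hB₁sub : B₁ ⊆ gs n :=
      Finset.insert_subset hegs ((Finset.erase_subset _ _).trans hBsub)
    have hAB₁ : A ∩ B₁ = S.erase x := by
      ext z
      simp only [hB₁, hS, Finset.mem_inter, Finset.mem_insert, Finset.mem_erase]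
      constructor
      · rintro ⟨hzA, rfl | ⟨hzx, hzB⟩⟩
        · exact absurd hzA heA
        · exact ⟨hzx, hzA, hzB⟩
      · rintro ⟨hzx, hzA, hzB⟩
        exact ⟨hzA, Or.inr ⟨hzx, hzB⟩⟩
    have hcard₁ : (A ∩ B₁).card = S.card - 1 := by
      rw [hAB₁, Finset.card_erase_of_mem hxS]
    have hSpos : 0 < S.card := Finset.card_pos.mpr ⟨x, hxS⟩
    by_cases hrec : t ≤ (A ∩ B₁).card
    · refine ih B₁ hB₁G hB₁sub (by omega) hrec ?_
      intro s hs
      have hs1 : 1 ≤ s := (mem_gs.mp hs).1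
      have hsn : s ≤ n := (mem_gs.mp hs).2
      by_cases hsx : x ≤ s
      · have hBeq : B₁ ∩ gs s = insert e ((B ∩ gs s).erase x) := by
          ext z
          simp only [hB₁, Finset.mem_inter, Finset.mem_insert, Finset.mem_erase]
          constructor
          · rintro ⟨rfl | ⟨hzx, hzB⟩, hzgs⟩
            · exact Or.inl rfl
            · exact Or.inr ⟨hzx, hzB, hzgs⟩
          · rintro (rfl | ⟨hzx, hzB, hzgs⟩)
            · exact ⟨Or.inl rfl, mem_gs.mpr ⟨he1, le_trans (le_of_lt hex') hsx⟩⟩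
            · exact ⟨Or.inr ⟨hzx, hzB⟩, hzgs⟩
        have hxmem : x ∈ B ∩ gs s := Finset.mem_inter.mpr ⟨hxB, mem_gs.mpr ⟨hx1, hsx⟩⟩
        have hcards : (B₁ ∩ gs s).card = (B ∩ gs s).card := by
          rw [hBeq, Finset.card_insert_of_notMem
            (fun hh => heB (Finset.mem_inter.mp (Finset.mem_of_mem_erase hh)).1),
            Finset.card_erase_of_mem hxmem]
          have := Finset.card_pos.mpr ⟨x, hxmem⟩
          omega
        have := hinv s hs
        omega
      · push_neg at hsx
        by_cases hes : e ≤ s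
        · have hBeq : B₁ ∩ gs s = insert e (B ∩ gs s) := by
            ext z
            simp only [hB₁, Finset.mem_inter, Finset.mem_insert, Finset.mem_erase]
            constructor
            · rintro ⟨rfl | ⟨hzx, hzB⟩, hzgs⟩
              · exact Or.inl rfl
              · exact Or.inr ⟨hzB, hzgs⟩
            · rintro (rfl | ⟨hzB, hzgs⟩)
              · exact ⟨Or.inl rfl, mem_gs.mpr ⟨he1, hes⟩⟩
              · have : z ≠ x := by
                  have := (mem_gs.mp hzgs).2
                  omega
                exact ⟨Or.inr ⟨this, hzB⟩, hzgs⟩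
          have hcards : (B₁ ∩ gs s).card = (B ∩ gs s).card + 1 := by
            rw [hBeq, Finset.card_insert_of_notMem
              (fun hh => heB (Finset.mem_inter.mp hh).1)]
          have hsubAB : (A ∪ B) ∩ gs s ⊆ (gs s).erase e := by
            intro z hz
            have hz1 := Finset.mem_inter.mp hz
            refine Finset.mem_erase.mpr ⟨fun hh => heAB (hh ▸ hz1.1), hz1.2⟩
          have hABs : ((A ∪ B) ∩ gs s).card + 1 ≤ s := by
            have hc := Finset.card_le_card hsubAB
            rw [Finset.card_erase_of_mem (mem_gs.mpr ⟨he1, hes⟩), card_gs] at hc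
            omega
          have hSs : (S ∩ gs s).card ≤ t - 1 := by
            have hsub2 : S ∩ gs s ⊆ S.filter (· < x) := by
              intro z hz
              have hz1 := Finset.mem_inter.mp hz
              refine Finset.mem_filter.mpr ⟨hz1.1, ?_⟩
              have := (mem_gs.mp hz1.2).2
              omega
            have := Finset.card_le_card hsub2
            omega
          have hid2 := count_id A B s
          rw [← hS] at hid2
          omega
        · push_neg at hes
          have hBeq : B₁ ∩ gs s = B ∩ gs s := by
            ext z
            simp only [hB₁, Finset.mem_inter, Finset.mem_insert, Finset.mem_erase]
            constructor
            · rintro ⟨rfl | ⟨hzx, hzB⟩, hzgs⟩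
              · have := (mem_gs.mp hzgs).2
                omega
              · exact ⟨hzB, hzgs⟩
            · rintro ⟨hzB, hzgs⟩
              have hzs := (mem_gs.mp hzgs).2
              exact ⟨Or.inr ⟨by omega, hzB⟩, hzgs⟩
          rw [hBeq]
          exact hinv s hs
    · push_neg at hrec
      exact ⟨B₁, hB₁G, hrec⟩

lemma exists_compressed (n a b t : ℕ) (N : ℕ) :
    ∀ (F G : Finset (Finset ℕ)), W F + W G ≤ N →
      UniformOn n a F → UniformOn n b G → CrossInt t F G →
      ∃ Fs Gs : Finset (Finset ℕ),
        UniformOn n a Fs ∧ Fs.card = F.card ∧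
        UniformOn n b Gs ∧ Gs.card = G.card ∧
        CrossInt t Fs Gs ∧ Compressed n Gs := by
  induction N using Nat.strong_induction_on with
  | _ N ih =>
    intro F G hN hF hG hFG
    by_cases hc : ∀ i ∈ gs n, ∀ j ∈ gs n, i < j → cf i j F = F ∧ cf i j G = G
    · refine ⟨F, G, hF, rfl, hG, rfl, hFG, ?_⟩
      intro i j hi hj hij B hB hjB hiB
      have hGfix := (hc i hi j hj hij).2
      have hmem : (if cswp i j B ∈ G then B else cswp i j B) ∈ cf i j G :=
        Finset.mem_image_of_mem _ hB
      rw [hGfix] at hmem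
      have hcmp : cswp i j B = insert i (B.erase j) := by simp [cswp, hjB, hiB]
      by_cases hin : cswp i j B ∈ G
      · rw [hcmp] at hin; exact hin
      · rw [if_neg hin, hcmp] at hmem; exact hmem
    · push_neg at hc
      obtain ⟨i, hi, j, hj, hij, hne⟩ := hc
      have hWF := W_cf_le i j hij F
      have hWG := W_cf_le i j hij G
      have hlt : W (cf i j F) + W (cf i j G) < N := by
        by_cases hneF : cf i j F = F
        · have := hWG.2 (hne hneF)
          omega
        · have := hWF.2 hneF
          omega
      obtain ⟨Fs, Gs, h1, h2, h3, h4, h5, h6⟩ :=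
        ih _ hlt (cf i j F) (cf i j G) le_rfl
          (uniform_cf n a i j hij hi F hF)
          (uniform_cf n b i j hij hi G hG)
          (cross_cf i j hij t F G hFG)
      exact ⟨Fs, Gs, h1, by rw [h2, cf_card i j hij], h3,
        by rw [h4, cf_card i j hij], h5, h6⟩

/-- Theorem 1 of the paper. -/
theorem compressed_pair_exists (n a b t : ℕ) (hn : 0 < n) (ha : 0 < a) (hb : 0 < b)
    (ht : 0 < t) (F G : Finset (Finset ℕ))
    (hF : UniformOn n a F) (hG : UniformOn n b G) (hFG : CrossInt t F G) :
    ∃ Fs Gs : Finset (Finset ℕ),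
      UniformOn n a Fs ∧ Fs.card = F.card ∧
      UniformOn n b Gs ∧ Gs.card = G.card ∧
      ∀ A ∈ Fs, ∀ B ∈ Gs, ∃ s ∈ gs n,
        s + t ≤ (A ∩ gs s).card + (B ∩ gs s).card := by
  obtain ⟨Fs, Gs, h1, h2, h3, h4, h5, h6⟩ :=
    exists_compressed n a b t (W F + W G) F G le_rfl hF hG hFG
  refine ⟨Fs, Gs, h1, h2, h3, h4, ?_⟩
  intro A hA B hB
  by_contra hcon
  push_neg at hcon
  obtain ⟨B', hB'G, hlt⟩ :=
    key n t ht Gs h6 A (A ∩ B).card B hB (h3 B hB).1 le_rfl (h5 A hA B hB)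
      (fun s hs => by have := hcon s hs; omega)
  have := h5 A hA B' hB'G
  omega
end

section
/- Let n, a, b, t be positive integers. Then N̂_prod(n,a,b,t) ≤ N_prod(n,a,b,t) ≤ n² · N̂_prod(n,a,b,t). -/
/-!
Hirschorn pairs are cross-`t`-intersecting, which gives the lower bound. For the upper bound,
compressing both families along the same pair `i < j` keeps their sizes, uniformity and
cross-`t`-intersection, so we may assume that `G` is shifted. Then every `A ∈ F`, `B ∈ G` admit an
`s ∈ [n]` with `|A ∩ [s]| + |B ∩ [s]| ≥ s + t` (Frankl), so `(A, B)` lies in the Hirschorn pair with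
parameters `s` and `u = s + t - |B ∩ [s]|`. There are at most `n²` such parameter pairs `(s, u)`.
-/

open Finset

/-- The maximum of `|F| ⬝ |G|` over cross-`t`-intersecting pairs where `F` is an
`a`-uniform family and `G` a `b`-uniform family of subsets of `[n]`. -/
noncomputable def NProd (n a b t : ℕ) : ℕ :=
  sSup {x : ℕ | ∃ F G : Finset (Finset ℕ),
    UniformOn n a F ∧ UniformOn n b G ∧ CrossInt t F G ∧ x = F.card * G.card}

/-- The family `{A ∈ C([n],m) : |A ∩ [s]| ≥ u}` appearing in a Hirschorn pair. -/
def HirschF (n m s u : ℕ) : Finset (Finset ℕ) :=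
  ((gs n).powersetCard m).filter (fun A => u ≤ (A ∩ gs s).card)

/-- The maximum of `|F| ⬝ |G|` over all Hirschorn pairs `(F, G)` with parameters
`u, v, s ∈ [n]`, `u + v = s + t`. -/
noncomputable def NHatProd (n a b t : ℕ) : ℕ :=
  sSup {x : ℕ | ∃ u ∈ gs n, ∃ v ∈ gs n, ∃ s ∈ gs n, u + v = s + t ∧
    x = (HirschF n a s u).card * (HirschF n b s v).card}

open UV
open scoped FinsetFamily

section SingletonCompression

variable {α : Type*} [DecidableEq α] {i j : α} {A B S : Finset α}

lemma compress_singleton_of_mem_of_notMem (hj : j ∈ A) (hi : i ∉ A) :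
    compress {i} {j} A = insert i (A.erase j) := by
  rw [compress_of_disjoint_of_le (disjoint_singleton_left.2 hi) (singleton_subset_iff.2 hj)]
  have hij : i ≠ j := fun h => hi (h ▸ hj)
  ext x
  simp only [sup_eq_union, mem_sdiff, mem_union, mem_singleton, mem_insert, mem_erase]
  grind

lemma compress_singleton_of_not (h : ¬(j ∈ A ∧ i ∉ A)) : compress {i} {j} A = A := by
  rw [compress, if_neg]
  simpa [and_comm] using h

lemma mem_and_notMem_of_compress_ne (h : compress {i} {j} A ≠ A) : j ∈ A ∧ i ∉ A := by
  by_contra h'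
  exact h (compress_singleton_of_not h')

lemma card_insert_erase_inter (hj : j ∈ B) (hi : i ∉ B) (hjS : j ∈ S) (hiS : i ∈ S) :
    #(insert i (B.erase j) ∩ S) = #(B ∩ S) := by
  rw [insert_inter_of_mem hiS, erase_inter, card_insert_of_notMem (by simp [hi]),
    card_erase_add_one (mem_inter.2 ⟨hj, hjS⟩)]

lemma le_card_inter_compress {t : ℕ} (h : t ≤ #(A ∩ B)) (h' : t ≤ #(compress {i} {j} A ∩ B)) :
    t ≤ #(A ∩ compress {i} {j} B) := by
  by_cases hB : j ∈ B ∧ i ∉ B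
  swap
  · rwa [compress_singleton_of_not hB]
  obtain ⟨hjB, hiB⟩ := hB
  rw [compress_singleton_of_mem_of_notMem hjB hiB]
  by_cases hjA : j ∈ A
  · by_cases hiA : i ∈ A
    · rwa [inter_comm, card_insert_erase_inter hjB hiB hjA hiA, inter_comm]
    · rwa [compress_singleton_of_mem_of_notMem hjA hiA, insert_inter_of_notMem hiB, erase_inter,
        ← inter_erase, ← inter_insert_of_notMem hiA] at h'
  · refine h.trans (card_le_card fun x hx => ?_)
    obtain ⟨hxA, hxB⟩ := mem_inter.1 hx
    exact mem_inter.2 ⟨hxA, mem_insert_of_mem (mem_erase.2 ⟨ne_of_mem_of_not_mem hxA hjA, hxB⟩)⟩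

lemma card_compress_inter_compress (hA : compress {i} {j} A ≠ A) (hB : compress {i} {j} B ≠ B) :
    #(compress {i} {j} A ∩ compress {i} {j} B) = #(A ∩ B) := by
  obtain ⟨hjA, hiA⟩ := mem_and_notMem_of_compress_ne hA
  obtain ⟨hjB, hiB⟩ := mem_and_notMem_of_compress_ne hB
  rw [compress_singleton_of_mem_of_notMem hjA hiA, compress_singleton_of_mem_of_notMem hjB hiB,
    ← insert_inter_distrib, erase_inter, inter_erase, erase_idem,
    card_insert_of_notMem (by simp [hiA]), card_erase_add_one (mem_inter.2 ⟨hjA, hjB⟩)]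

end SingletonCompression

lemma CrossInt.compression {t i j : ℕ} {F G : Finset (Finset ℕ)} (h : CrossInt t F G) :
    CrossInt t (𝓒 {i} {j} F) (𝓒 {i} {j} G) := by
  intro A' hA' B' hB'
  rcases mem_compression.1 hA' with ⟨hA, hcA⟩ | ⟨hA'F, A, hA, rfl⟩ <;>
    rcases mem_compression.1 hB' with ⟨hB, hcB⟩ | ⟨hB'G, B, hB, rfl⟩
  · exact h _ hA _ hB
  · exact le_card_inter_compress (h _ hA _ hB) (h _ hcA _ hB)
  · rw [inter_comm]
    exact le_card_inter_compress (by rw [inter_comm]; exact h _ hA _ hB)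
      (by rw [inter_comm]; exact h _ hA _ hcB)
  · rw [card_compress_inter_compress (ne_of_mem_of_not_mem hA hA'F).symm
      (ne_of_mem_of_not_mem hB hB'G).symm]
    exact h _ hA _ hB

lemma UniformOn.compression {n m i j : ℕ} {F : Finset (Finset ℕ)} (hi : 0 < i) (hij : i < j)
    (hF : UniformOn n m F) : UniformOn n m (𝓒 {i} {j} F) := by
  intro A hA
  rcases mem_compression.1 hA with ⟨hA, -⟩ | ⟨-, B, hB, rfl⟩
  · exact hF A hA
  obtain ⟨hBn, hBm⟩ := hF B hB
  refine ⟨?_, by rw [card_compress (by simp), hBm]⟩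
  by_cases h : j ∈ B ∧ i ∉ B
  · rw [compress_singleton_of_mem_of_notMem h.1 h.2]
    have hj := hBn h.1
    simp only [gs, mem_Icc] at hj
    exact insert_subset (by simp only [gs, mem_Icc]; omega) ((erase_subset _ _).trans hBn)
  · rwa [compress_singleton_of_not h]

/-- Shifting never moves an element to `0`, which lies outside the ground set `[n]`. -/
def IsShifted (G : Finset (Finset ℕ)) : Prop :=
  ∀ ⦃i j : ℕ⦄, 0 < i → i < j → ∀ B ∈ G, compress {i} {j} B ∈ G

def familyWeight (G : Finset (Finset ℕ)) : ℕ := ∑ B ∈ G, ∑ x ∈ B, x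

lemma sum_compress_lt {i j : ℕ} {B : Finset ℕ} (hij : i < j) (h : compress {i} {j} B ≠ B) :
    ∑ x ∈ compress {i} {j} B, x < ∑ x ∈ B, x := by
  obtain ⟨hj, hi⟩ := mem_and_notMem_of_compress_ne h
  rw [compress_singleton_of_mem_of_notMem hj hi, sum_insert (by simp [hi]), ← add_sum_erase B _ hj]
  omega

lemma familyWeight_compression_lt {i j : ℕ} {G : Finset (Finset ℕ)} (hij : i < j)
    (h : ∃ B ∈ G, compress {i} {j} B ∉ G) : familyWeight (𝓒 {i} {j} G) < familyWeight G := by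
  obtain ⟨B, hB, hcB⟩ := h
  have hmoved : ∀ A ∈ {A ∈ G | compress {i} {j} A ∉ G},
      ∑ x ∈ compress {i} {j} A, x < ∑ x ∈ A, x := by
    intro A hA
    obtain ⟨hAG, hcA⟩ := mem_filter.1 hA
    exact sum_compress_lt hij (ne_of_mem_of_not_mem hAG hcA).symm
  rw [familyWeight, familyWeight, compression, sum_union compress_disjoint, filter_image,
    sum_image compress_injOn, ← sum_filter_add_sum_filter_not G (compress {i} {j} · ∈ G)]
  exact add_lt_add_right (sum_lt_sum (fun A hA => (hmoved A hA).le)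
    ⟨B, mem_filter.2 ⟨hB, hcB⟩, hmoved B (mem_filter.2 ⟨hB, hcB⟩)⟩) _

theorem exists_isShifted_of_crossInt {n a b t : ℕ} {F G : Finset (Finset ℕ)}
    (hF : UniformOn n a F) (hG : UniformOn n b G) (hFG : CrossInt t F G) :
    ∃ F' G', UniformOn n a F' ∧ UniformOn n b G' ∧ CrossInt t F' G' ∧ IsShifted G' ∧
      #F' = #F ∧ #G' = #G := by
  induction hw : familyWeight G using Nat.strong_induction_on generalizing F G with
  | _ w ih =>
  by_cases hS : IsShifted G
  · exact ⟨F, G, hF, hG, hFG, hS, rfl, rfl⟩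
  obtain ⟨i, j, hi, hij, B, hB, hcB⟩ : ∃ i j, 0 < i ∧ i < j ∧ ∃ B ∈ G, compress {i} {j} B ∉ G := by
    simpa [IsShifted] using hS
  obtain ⟨F', G', hF', hG', hFG', hS', hF'F, hG'G⟩ :=
    ih _ (hw ▸ familyWeight_compression_lt hij ⟨B, hB, hcB⟩) (hF.compression hi hij)
      (hG.compression hi hij) hFG.compression rfl
  exact ⟨F', G', hF', hG', hFG', hS', by rw [hF'F, card_compression],
    by rw [hG'G, card_compression]⟩

lemma card_inter_add_card_inter {α : Type*} [DecidableEq α] (A B S : Finset α) :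
    #(A ∩ S) + #(B ∩ S) = #((A ∪ B) ∩ S) + #(A ∩ B ∩ S) := by
  rw [union_inter_distrib_right, inter_inter_distrib_right, card_union_add_card_inter]

lemma card_inter_gs_le (A : Finset ℕ) (s : ℕ) : #(A ∩ gs s) ≤ s := by
  simpa [gs] using card_le_card (inter_subset_right : A ∩ gs s ⊆ gs s)

lemma exists_mem_first_le_card_inter_gs {n t : ℕ} {X : Finset ℕ} (hX : X ⊆ gs n) (ht : 0 < t)
    (htX : t ≤ #X) : ∃ j ∈ X, t ≤ #(X ∩ gs j) ∧ ∀ s < j, #(X ∩ gs s) < t := by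
  obtain ⟨j, htj, hmin⟩ : ∃ j, t ≤ #(X ∩ gs j) ∧ ∀ s < j, #(X ∩ gs s) < t := by
    have hex : ∃ j, t ≤ #(X ∩ gs j) := ⟨n, by rwa [inter_eq_left.2 hX]⟩
    exact ⟨Nat.find hex, Nat.find_spec hex, fun s hs => not_le.1 (Nat.find_min hex hs)⟩
  refine ⟨j, ?_, htj, hmin⟩
  by_contra hj
  have hpos : 0 < j := by
    by_contra h0
    simp_all [gs]
  have hsub : X ∩ gs j ⊆ X ∩ gs (j - 1) := by
    intro x hx
    obtain ⟨hxX, hxj⟩ := mem_inter.1 hx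
    have hne : x ≠ j := ne_of_mem_of_not_mem hxX hj
    simp only [gs, mem_Icc] at hxj
    exact mem_inter.2 ⟨hxX, by simp only [gs, mem_Icc]; omega⟩
  exact (hmin _ (by omega)).not_ge (htj.trans (card_le_card hsub))

lemma prefix_bound_insert_erase {n t i j : ℕ} {A B : Finset ℕ} (hi : 0 < i) (hij : i < j)
    (hiA : i ∉ A) (hjB : j ∈ B) (hiB : i ∉ B) (hAB : ∀ s < j, #(A ∩ B ∩ gs s) < t)
    (hbound : ∀ s ∈ gs n, #(A ∩ gs s) + #(B ∩ gs s) < s + t) :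
    ∀ s ∈ gs n, #(A ∩ gs s) + #(insert i (B.erase j) ∩ gs s) < s + t := by
  intro s hs
  rcases lt_or_ge s j with hsj | hjs
  · have hsub : A ∩ insert i (B.erase j) ∩ gs s ⊆ A ∩ B ∩ gs s := by
      rw [inter_insert_of_notMem hiA, inter_erase, erase_inter]
      exact erase_subset _ _
    have hsplit := card_inter_add_card_inter A (insert i (B.erase j)) (gs s)
    have hunion := card_inter_gs_le (A ∪ insert i (B.erase j)) s
    have hinter := (card_le_card hsub).trans_lt (hAB s hsj)
    omega
  · rw [card_insert_erase_inter hjB hiB (by simp only [gs, mem_Icc]; omega)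
      (by simp only [gs, mem_Icc]; omega)]
    exact hbound s hs

theorem exists_prefix_of_isShifted {n t : ℕ} (ht : 0 < t) {F G : Finset (Finset ℕ)}
    (hG : IsShifted G) (hGn : ∀ B ∈ G, B ⊆ gs n) (hFG : CrossInt t F G) {A B : Finset ℕ}
    (hA : A ∈ F) (hB : B ∈ G) : ∃ s ∈ gs n, s + t ≤ #(A ∩ gs s) + #(B ∩ gs s) := by
  by_contra! hbound
  -- Let `j` be the `t`-th element of `A ∩ B`. The prefix bound at `j` leaves a gap `i < j` outside
  -- `A ∪ B`; moving `j` to `i` in `B` stays in `G`, keeps the prefix bound and shrinks `A ∩ B`.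
  induction hm : #(A ∩ B) using Nat.strong_induction_on generalizing B with
  | _ m ih =>
  obtain ⟨j, hjAB, htj, hlt⟩ := exists_mem_first_le_card_inter_gs
    (inter_subset_right.trans (hGn B hB)) ht (hFG A hA B hB)
  obtain ⟨hjA, hjB⟩ := mem_inter.1 hjAB
  have hfree : #((A ∪ B) ∩ gs j) < #(gs j) := by
    have hsplit := card_inter_add_card_inter A B (gs j)
    have hj := hbound j (hGn B hB hjB)
    have hcard : #(gs j) = j := by simp [gs]
    omega
  obtain ⟨i, hij, hiAB⟩ := exists_mem_notMem_of_card_lt_card hfree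
  have hiA : i ∉ A := fun h => hiAB (mem_inter.2 ⟨mem_union_left _ h, hij⟩)
  have hiB : i ∉ B := fun h => hiAB (mem_inter.2 ⟨mem_union_right _ h, hij⟩)
  have hi : 0 < i ∧ i < j := by
    have hne := ne_of_mem_of_not_mem hjA hiA
    simp only [gs, mem_Icc] at hij
    omega
  have hB' : insert i (B.erase j) ∈ G :=
    compress_singleton_of_mem_of_notMem hjB hiB ▸ hG hi.1 hi.2 B hB
  have hdrop : #(A ∩ insert i (B.erase j)) < m := by
    rw [inter_insert_of_notMem hiA, inter_erase, ← hm]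
    exact card_erase_lt_of_mem hjAB
  exact ih _ hdrop hB' (prefix_bound_insert_erase hi.1 hi.2 hiA hjB hiB hlt hbound) rfl

lemma mem_hirschF {n m s u : ℕ} {A : Finset ℕ} :
    A ∈ HirschF n m s u ↔ (A ⊆ gs n ∧ #A = m) ∧ u ≤ #(A ∩ gs s) := by
  rw [HirschF, mem_filter, mem_powersetCard]

lemma uniformOn_hirschF {n m s u : ℕ} : UniformOn n m (HirschF n m s u) :=
  fun _ hA => (mem_hirschF.1 hA).1

lemma crossInt_hirschF {n a b t s u v : ℕ} (huv : u + v = s + t) :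
    CrossInt t (HirschF n a s u) (HirschF n b s v) := by
  intro A hA B hB
  have hsplit := card_inter_add_card_inter A B (gs s)
  have hunion := card_inter_gs_le (A ∪ B) s
  have hinter := card_le_card (inter_subset_left : A ∩ B ∩ gs s ⊆ A ∩ B)
  have hu := (mem_hirschF.1 hA).2
  have hv := (mem_hirschF.1 hB).2
  omega

lemma UniformOn.card_le {n m : ℕ} {F : Finset (Finset ℕ)} (hF : UniformOn n m F) :
    #F ≤ n.choose m := by
  simpa [gs] using card_le_card (fun A hA => mem_powersetCard.2 (hF A hA) :
    F ⊆ (gs n).powersetCard m)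

lemma le_nProd {n a b t : ℕ} {F G : Finset (Finset ℕ)} (hF : UniformOn n a F)
    (hG : UniformOn n b G) (hFG : CrossInt t F G) : #F * #G ≤ NProd n a b t :=
  le_csSup ⟨n.choose a * n.choose b, by
    rintro _ ⟨F, G, hF, hG, -, rfl⟩
    exact Nat.mul_le_mul hF.card_le hG.card_le⟩ ⟨F, G, hF, hG, hFG, rfl⟩

lemma card_hirschF_mul_le_nProd {n a b t s u v : ℕ} (huv : u + v = s + t) :
    #(HirschF n a s u) * #(HirschF n b s v) ≤ NProd n a b t :=
  le_nProd uniformOn_hirschF uniformOn_hirschF (crossInt_hirschF huv)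

lemma nHatProd_le_nProd (n a b t : ℕ) : NHatProd n a b t ≤ NProd n a b t :=
  csSup_le' <| by
    rintro _ ⟨u, -, v, -, s, -, huv, rfl⟩
    exact card_hirschF_mul_le_nProd huv

lemma card_hirschF_mul_le_nHatProd {n a b t s u v : ℕ} (hu : u ∈ gs n) (hv : v ∈ gs n)
    (hs : s ∈ gs n) (huv : u + v = s + t) :
    #(HirschF n a s u) * #(HirschF n b s v) ≤ NHatProd n a b t :=
  le_csSup ⟨NProd n a b t, by
    rintro _ ⟨u, -, v, -, s, -, huv, rfl⟩
    exact card_hirschF_mul_le_nProd huv⟩ ⟨u, hu, v, hv, s, hs, huv, rfl⟩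

lemma card_mul_card_le_of_isShifted {n a b t : ℕ} (ht : 0 < t) {F G : Finset (Finset ℕ)}
    (hF : UniformOn n a F) (hG : UniformOn n b G) (hFG : CrossInt t F G) (hS : IsShifted G) :
    #F * #G ≤ n ^ 2 * NHatProd n a b t := by
  let I := {p ∈ gs n ×ˢ gs n | p.2 ≤ p.1 + t ∧ p.1 + t - p.2 ∈ gs n}
  let P : ℕ × ℕ → Finset (Finset ℕ × Finset ℕ) := fun p =>
    HirschF n a p.1 p.2 ×ˢ HirschF n b p.1 (p.1 + t - p.2)
  have hcover : F ×ˢ G ⊆ I.biUnion P := by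
    rintro ⟨A, B⟩ hAB
    simp only [mem_product] at hAB
    obtain ⟨hA, hB⟩ := hAB
    obtain ⟨s, hs, hst⟩ := exists_prefix_of_isShifted ht hS (fun B hB => (hG B hB).1) hFG hA hB
    have hAs := card_inter_gs_le A s
    have hBs := card_inter_gs_le B s
    refine mem_biUnion.2 ⟨(s, s + t - #(B ∩ gs s)), ?_, mem_product.2
      ⟨mem_hirschF.2 ⟨hF A hA, by dsimp; omega⟩, mem_hirschF.2 ⟨hG B hB, by dsimp; omega⟩⟩⟩
    have hs' := mem_Icc.1 hs
    exact mem_filter.2 ⟨mem_product.2 ⟨hs, mem_Icc.2 (by omega)⟩, by omega, mem_Icc.2 (by omega)⟩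
  have hP : ∀ p ∈ I, #(P p) ≤ NHatProd n a b t := by
    rintro ⟨s, u⟩ hp
    obtain ⟨hsu, hut, hv⟩ := mem_filter.1 hp
    obtain ⟨hs, hu⟩ := mem_product.1 hsu
    exact (card_product _ _).trans_le (card_hirschF_mul_le_nHatProd hu hv hs (by omega))
  calc #F * #G = #(F ×ˢ G) := (card_product F G).symm
    _ ≤ #(I.biUnion P) := card_le_card hcover
    _ ≤ #I * NHatProd n a b t := card_biUnion_le_card_mul I P _ hP
    _ ≤ n ^ 2 * NHatProd n a b t := by
      gcongr
      calc #I ≤ #(gs n ×ˢ gs n) := card_filter_le _ _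
        _ = n ^ 2 := by simp [gs, sq]

lemma nProd_le_sq_mul_nHatProd {n a b t : ℕ} (ht : 0 < t) :
    NProd n a b t ≤ n ^ 2 * NHatProd n a b t :=
  csSup_le' <| by
    rintro _ ⟨F, G, hF, hG, hFG, rfl⟩
    obtain ⟨F', G', hF', hG', hFG', hS, hF'F, hG'G⟩ := exists_isShifted_of_crossInt hF hG hFG
    rw [← hF'F, ← hG'G]
    exact card_mul_card_le_of_isShifted ht hF' hG' hFG' hS

theorem sandwich_for_product_general (n a b t : ℕ) (ht : 0 < t) :
    NHatProd n a b t ≤ NProd n a b t ∧ NProd n a b t ≤ n ^ 2 * NHatProd n a b t :=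
  ⟨nHatProd_le_nProd n a b t, nProd_le_sq_mul_nHatProd ht⟩

/-- Corollary for the product functional. -/
theorem sandwich_for_product (n a b t : ℕ) (hn : 0 < n) (ha : 0 < a) (hb : 0 < b)
    (ht : 0 < t) :
    NHatProd n a b t ≤ NProd n a b t ∧ NProd n a b t ≤ n ^ 2 * NHatProd n a b t :=
  sandwich_for_product_general n a b t ht
end

section
/- For every positive integer n with n ≡ 8 (mod 12), one has N_prod(n, 2, n−2, 1) > N̂_prod(n, 2, n−2, 1). -/
open Finset

private lemma gs_card (n : ℕ) : (gs n).card = n := by simp [gs]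

private lemma gs_subset {s n : ℕ} (h : s ≤ n) : gs s ⊆ gs n :=
  Finset.Icc_subset_Icc le_rfl h

private lemma two_mul_choose_two (s : ℕ) : 2 * s.choose 2 = s * (s - 1) := by
  rcases s with _ | m
  · simp
  · rw [Nat.choose_two_right]
    have h : 2 ∣ (m + 1) * ((m + 1) - 1) := by
      simpa [Nat.mul_comm] using (Nat.even_mul_succ_self m).two_dvd
    exact Nat.mul_div_cancel' h

private lemma mod_three_key {n : ℕ} (hn : n % 3 = 2) (k : ℕ) :
    2 * (k * (k - 1)) ≠ n * (n - 1) := by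
  intro h
  have hXm : (k * (k - 1)) % 3 = (k % 3 * ((k - 1) % 3)) % 3 := Nat.mul_mod _ _ _
  have hYm : (n * (n - 1)) % 3 = (n % 3 * ((n - 1) % 3)) % 3 := Nat.mul_mod _ _ _
  have hn1 : (n - 1) % 3 = 1 := by omega
  rw [hn, hn1] at hYm
  norm_num at hYm
  have hk : k % 3 = 0 ∨ k % 3 = 1 ∨ k % 3 = 2 := by omega
  rcases hk with hk | hk | hk
  · rw [hk] at hXm; norm_num at hXm; omega
  · have h2 : (k - 1) % 3 = 0 := by omega
    rw [hk, h2] at hXm; norm_num at hXm; omega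
  · have h2 : (k - 1) % 3 = 1 := by omega
    rw [hk, h2] at hXm; norm_num at hXm; omega

private lemma hirsch_two_two {n s : ℕ} (hs : s ≤ n) :
    HirschF n 2 s 2 = (gs s).powersetCard 2 := by
  ext A
  simp only [HirschF, mem_filter, mem_powersetCard]
  constructor
  · rintro ⟨⟨hsub, hcard⟩, hint⟩
    refine ⟨?_, hcard⟩
    have h1 : A ∩ gs s = A :=
      (Finset.eq_of_subset_of_card_le inter_subset_left (by omega)).symm.symm
    exact inter_eq_left.mp h1
  · rintro ⟨hsub, hcard⟩
    exact ⟨⟨hsub.trans (gs_subset hs), hcard⟩, by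
      rw [inter_eq_left.mpr hsub, hcard]⟩

private lemma hirsch_one_card {n s : ℕ} (hs : s ≤ n) :
    (HirschF n 2 s 1).card + (n - s).choose 2 = n.choose 2 := by
  have hneg : ((gs n).powersetCard 2).filter (fun A => ¬ 1 ≤ (A ∩ gs s).card)
      = (Finset.Icc (s + 1) n).powersetCard 2 := by
    ext A
    simp only [mem_filter, mem_powersetCard, not_le, Nat.lt_one_iff, card_eq_zero]
    constructor
    · rintro ⟨⟨hsub, hcard⟩, hint⟩
      refine ⟨fun x hx => ?_, hcard⟩
      have h1 := hsub hx
      have h2 : x ∉ gs s := fun hxs =>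
        (Finset.notMem_empty x) (hint ▸ Finset.mem_inter.mpr ⟨hx, hxs⟩)
      simp only [gs, Finset.mem_Icc] at *
      omega
    · rintro ⟨hsub, hcard⟩
      refine ⟨⟨fun x hx => ?_, hcard⟩, ?_⟩
      · have := hsub hx; simp only [gs, Finset.mem_Icc] at *; omega
      · rw [Finset.eq_empty_iff_forall_notMem]
        intro x hx
        rw [Finset.mem_inter] at hx
        have h1 := hsub hx.1
        have h2 := hx.2
        simp only [gs, Finset.mem_Icc] at *
        omega
  have h2 := Finset.card_filter_add_card_filter_not
    (s := (gs n).powersetCard 2) (p := fun A => 1 ≤ (A ∩ gs s).card)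
  rw [hneg, card_powersetCard, card_powersetCard, gs_card, Nat.card_Icc] at h2
  have h3 : n + 1 - (s + 1) = n - s := by omega
  rw [h3] at h2
  exact h2

private lemma sdiff_invol {n : ℕ} {P : Finset ℕ} (h : P ⊆ gs n) :
    gs n \ (gs n \ P) = P :=
  Finset.sdiff_sdiff_eq_self h

private lemma inter_gs_eq {n s : ℕ} (hs : s ≤ n) (B : Finset ℕ) :
    (gs n \ B) ∩ gs s = gs s \ B := by
  ext x
  simp only [mem_inter, mem_sdiff]
  exact ⟨fun h => ⟨h.2, h.1.2⟩, fun h => ⟨⟨gs_subset hs h.1, h.2⟩, h.1⟩⟩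

private lemma hirsch_compl {n s u v : ℕ} (hn2 : 2 ≤ n) (hu : 1 ≤ u) (hv : 1 ≤ v)
    (hs : s ≤ n) (huv : u + v = s + 1) :
    (HirschF n 2 s u).card + (HirschF n (n - 2) s v).card = n.choose 2 := by
  have hcardgs : (gs n).card = n := gs_card n
  have hcards : (gs s).card = s := gs_card s
  have himg : HirschF n (n - 2) s v =
      (((gs n).powersetCard 2).filter (fun P => ¬ u ≤ (P ∩ gs s).card)).image
        (fun P => gs n \ P) := by
    ext B
    simp only [HirschF, mem_image, mem_filter, mem_powersetCard, not_le]
    constructor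
    · rintro ⟨⟨hBsub, hBcard⟩, hBint⟩
      refine ⟨gs n \ B, ⟨⟨sdiff_subset, ?_⟩, ?_⟩, sdiff_invol hBsub⟩
      · rw [card_sdiff_of_subset hBsub, hcardgs, hBcard]; omega
      · rw [inter_gs_eq hs]
        have h1 := card_sdiff_add_card_inter (gs s) B
        rw [inter_comm (gs s) B, hcards] at h1
        omega
    · rintro ⟨P, ⟨⟨hPsub, hPcard⟩, hPint⟩, rfl⟩
      refine ⟨⟨sdiff_subset, by rw [card_sdiff_of_subset hPsub, hcardgs, hPcard]⟩, ?_⟩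
      rw [inter_gs_eq hs]
      have h1 := card_sdiff_add_card_inter (gs s) P
      rw [inter_comm (gs s) P, hcards] at h1
      omega
  have hinj : Set.InjOn (fun P => gs n \ P)
      ↑(((gs n).powersetCard 2).filter (fun P => ¬ u ≤ (P ∩ gs s).card)) := by
    intro P hP Q hQ h
    simp only [coe_filter, Set.mem_setOf_eq, mem_powersetCard] at hP hQ
    have h2 := congrArg (fun X => gs n \ X) h
    simpa [sdiff_invol hP.1.1, sdiff_invol hQ.1.1] using h2
  rw [himg, card_image_of_injOn hinj]
  have h2 := Finset.card_filter_add_card_filter_not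
    (s := (gs n).powersetCard 2) (p := fun A => u ≤ (A ∩ gs s).card)
  rw [card_powersetCard, hcardgs] at h2
  exact h2

set_option maxHeartbeats 1000000 in
private lemma hirsch_empty {n s u : ℕ} (hu : 3 ≤ u) : HirschF n 2 s u = ∅ := by
  rw [Finset.eq_empty_iff_forall_notMem]
  intro A hA
  simp only [HirschF, mem_filter, mem_powersetCard] at hA
  have : (A ∩ gs s).card ≤ A.card := Finset.card_le_card Finset.inter_subset_left
  omega

set_option maxHeartbeats 1000000 in
/-- counterexamples for `n ≡ 8 (mod 12)`. -/
theorem counterexample_of_mod_twelve (n : ℕ) (hn : 0 < n) (hmod : n % 12 = 8) :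
    NHatProd n 2 (n - 2) 1 < NProd n 2 (n - 2) 1 := by
  obtain ⟨k, hk⟩ : ∃ k, n = 12 * k + 8 := ⟨n / 12, by omega⟩
  set H : ℕ := 36 * k ^ 2 + 45 * k + 14 with hH
  clear_value H
  have hn2 : 2 ≤ n := by omega
  have hmod3 : n % 3 = 2 := by omega
  have hHpos : 1 ≤ H := by
    have h0 : 0 < H := by rw [hH]; positivity
    exact h0
  have hnn : n * (n - 1) = 4 * H := by
    subst hk
    have h1 : 12 * k + 8 - 1 = 12 * k + 7 := by omega
    rw [h1, hH]; ring
  have hchoose : n.choose 2 = 2 * H := by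
    have h1 := two_mul_choose_two n
    omega
  -- upper bound for NHatProd
  have hub : NHatProd n 2 (n - 2) 1 ≤ H * H - 1 := by
    apply csSup_le'
    rintro x ⟨u, hu, v, hv, s, hs, huv, hx⟩
    simp only [gs, Finset.mem_Icc] at hu hv hs
    have hHH : 1 ≤ H * H := Nat.mul_le_mul hHpos hHpos
    by_cases hu3 : 3 ≤ u
    · rw [hirsch_empty hu3] at hx
      simp only [card_empty, zero_mul] at hx
      omega
    · have huv' : u + v = s + 1 := by omega
      have hsum := hirsch_compl hn2 hu.1 hv.1 hs.2 huv'
      set f := (HirschF n 2 s u).card with hf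
      set g := (HirschF n (n - 2) s v).card with hg
      clear_value f g
      have hfg : f + g = 2 * H := by omega
      have hfne : f ≠ H := by
        intro hfH
        have hu12 : u = 1 ∨ u = 2 := by omega
        rcases hu12 with rfl | rfl
        · have h1 := hirsch_one_card (n := n) (s := s) hs.2
          rw [← hf] at h1
          have h2 : (n - s).choose 2 = H := by omega
          apply mod_three_key hmod3 (n - s)
          have e1 := two_mul_choose_two (n - s)
          have e2 : 2 * ((n - s) * (n - s - 1)) = 4 * H := by omega
          omega
        · have h1 : f = s.choose 2 := by
            rw [hf, hirsch_two_two hs.2, card_powersetCard, gs_card]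
          apply mod_three_key hmod3 s
          have e1 := two_mul_choose_two s
          have e2 : 2 * (s * (s - 1)) = 4 * H := by omega
          omega
      have key : f * g + 1 ≤ H * H := by
        have h1 : (f : ℤ) + g = 2 * H := by exact_mod_cast hfg
        have h2 : (f : ℤ) ≠ H := by exact_mod_cast hfne
        have h3 : (1 : ℤ) ≤ ((f : ℤ) - H) ^ 2 := by
          have h4 : (f : ℤ) - H ≠ 0 := sub_ne_zero.mpr h2
          have h5 := Int.one_le_abs h4
          nlinarith [sq_abs ((f : ℤ) - H)]
        have h6 : (f : ℤ) * g + 1 ≤ (H : ℤ) * H := by nlinarith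
        exact_mod_cast h6
      rw [hx]
      exact Nat.le_pred_of_lt key
  -- lower bound for NProd
  have hlb : H * H ≤ NProd n 2 (n - 2) 1 := by
    have hbdd : BddAbove {x : ℕ | ∃ F G : Finset (Finset ℕ),
        UniformOn n 2 F ∧ UniformOn n (n - 2) G ∧ CrossInt 1 F G ∧
        x = F.card * G.card} := by
      refine ⟨2 ^ n * 2 ^ n, ?_⟩
      rintro x ⟨F, G, hF, hG, -, rfl⟩
      have hb : ∀ (m : ℕ) (S : Finset (Finset ℕ)), UniformOn n m S → S.card ≤ 2 ^ n := by
        intro m S hS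
        calc S.card ≤ ((gs n).powerset).card :=
              Finset.card_le_card (fun A hA => Finset.mem_powerset.mpr (hS A hA).1)
          _ = 2 ^ n := by rw [card_powerset, gs_card]
      exact Nat.mul_le_mul (hb 2 F hF) (hb (n - 2) G hG)
    apply le_csSup hbdd
    have hM : H ≤ ((gs n).powersetCard 2).card := by
      rw [card_powersetCard, gs_card, hchoose]; omega
    obtain ⟨F, hFsub, hFcard⟩ := Finset.exists_subset_card_eq hM
    set G : Finset (Finset ℕ) :=
      (((gs n).powersetCard 2) \ F).image (fun P => gs n \ P) with hG
    have hGcard : G.card = H := by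
      have hinj : Set.InjOn (fun P => gs n \ P) ↑(((gs n).powersetCard 2) \ F) := by
        intro P hP Q hQ h
        simp only [coe_sdiff, Set.mem_diff, mem_coe, mem_powersetCard] at hP hQ
        have h2 := congrArg (fun X => gs n \ X) h
        simpa [sdiff_invol hP.1.1, sdiff_invol hQ.1.1] using h2
      rw [hG, card_image_of_injOn hinj, card_sdiff_of_subset hFsub, card_powersetCard,
        gs_card, hFcard, hchoose]
      omega
    refine ⟨F, G, ?_, ?_, ?_, by rw [hFcard, hGcard]⟩
    · intro A hA
      have := hFsub hA
      rw [mem_powersetCard] at this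
      exact this
    · intro B hB
      rw [hG, Finset.mem_image] at hB
      obtain ⟨P, hP, rfl⟩ := hB
      rw [Finset.mem_sdiff, mem_powersetCard] at hP
      exact ⟨sdiff_subset, by rw [card_sdiff_of_subset hP.1.1, gs_card, hP.1.2]⟩
    · intro A hA B hB
      rw [hG, Finset.mem_image] at hB
      obtain ⟨P, hP, rfl⟩ := hB
      rw [Finset.mem_sdiff, mem_powersetCard] at hP
      have hAP : A ∈ (gs n).powersetCard 2 := hFsub hA
      rw [mem_powersetCard] at hAP
      have hint : A ∩ (gs n \ P) = A \ P := by
        ext x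
        simp only [mem_inter, mem_sdiff]
        exact ⟨fun h => ⟨h.1, h.2.2⟩, fun h => ⟨h.1, hAP.1 h.1, h.2⟩⟩
      rw [hint]
      rcases Finset.eq_empty_or_nonempty (A \ P) with he | hne
      · exfalso
        have hsub : A ⊆ P := Finset.sdiff_eq_empty_iff_subset.mp he
        have : A = P := Finset.eq_of_subset_of_card_le hsub (by omega)
        exact hP.2 (this ▸ hA)
      · exact Finset.card_pos.mpr hne
  have hlt : H * H - 1 < H * H := Nat.sub_lt (Nat.mul_pos hHpos hHpos) one_pos
  omega
end

section
/- Let n, a, b, t be positive integers with a ≤ n, b ≤ n and a + b < n + t. Then N_prod(n,a,b,t) ≤ n³ · exp(2 · h((a + b − 2t)/(2n)) · n), where h is the binary entropy function. -/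
/-!
Encode a pair `(A, B) ∈ F × G` by `(A \ B, B \ A, A ∩ B)`. For fixed differences `X, Y` the
possible intersections `J` form a `t`-intersecting family (since `(X ∪ J) ∩ (Y ∪ J') = J ∩ J'`)
of `(a - |X|)`-subsets of the remaining `n - |X| - |Y|` points. An approximate Kleitman bound,
proved by the same encoding applied to `H × H`, bounds such a family by `κ` times the volume of a
Hamming ball of radius `c - t`. Summing over `X, Y`, the resulting trinomial counts
`C(n; i, j, k)` with `i + j + 2k ≤ a + b - 2t` are at most `C(2n, a + b - 2t)` by Vandermonde,
there are at most `n³` of them, and `C(N, k) ≤ exp (N h(k / N))`.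
-/

open Finset

namespace Nat

theorem choose_mul_choose_le_add_choose (m n i j : ℕ) :
    m.choose i * n.choose j ≤ (m + n).choose (i + j) := by
  rw [add_choose_eq]
  exact single_le_sum (f := fun p : ℕ × ℕ => m.choose p.1 * n.choose p.2)
    (fun _ _ => Nat.zero_le _) (mem_antidiagonal.2 (rfl : (i, j).1 + (i, j).2 = i + j))

theorem choose_mul_choose_sub_eq (n i j : ℕ) :
    n.choose i * (n - i).choose j = n.choose (i + j) * (i + j).choose i := by
  simpa using (choose_mul (n := n) (le_add_right i j)).symm

theorem choose_mul_choose_sub_comm (n i j : ℕ) :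
    n.choose i * (n - i).choose j = n.choose j * (n - j).choose i := by
  rw [choose_mul_choose_sub_eq, choose_mul_choose_sub_eq, add_comm j i, choose_symm_add]

theorem choose_le_choose_of_le_half {N r s : ℕ} (hrs : r ≤ s) (hs : 2 * s ≤ N) :
    N.choose r ≤ N.choose s := by
  induction s, hrs using Nat.le_induction with
  | base => rfl
  | succ s _ ih => exact (ih (by omega)).trans (choose_le_succ_of_lt_half_left (by omega))

theorem choose_mul_choose_mul_choose_le (n i j k : ℕ) :
    n.choose i * (n - i).choose j * (n - i - j).choose k ≤
      n.choose (i + k) * n.choose (j + k) := by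
  rcases lt_or_ge n (i + k) with h | h
  · obtain hi | hi := lt_or_ge n i
    · simp [choose_eq_zero_of_lt hi]
    · simp [choose_eq_zero_of_lt (show n - i - j < k by omega)]
  have hswap : n.choose i * (n - i).choose j * (n - i - j).choose k
      = n.choose (i + k) * ((i + k).choose k * (n - (i + k)).choose j) := by
    rw [mul_assoc, choose_mul_choose_sub_comm (n - i) j k, ← mul_assoc, choose_mul_choose_sub_eq,
      choose_symm_add, Nat.sub_sub, mul_assoc]
  rw [hswap]
  gcongr
  simpa [add_tsub_cancel_of_le h, add_comm k j] using
    choose_mul_choose_le_add_choose (i + k) (n - (i + k)) k j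

theorem choose_mul_choose_mul_sum_choose_le (n i j l : ℕ) (h : i + j + 2 * l ≤ n) :
    n.choose i * (n - i).choose j * ∑ k ∈ range (l + 1), (n - i - j).choose k ≤
      (l + 1) * (2 * n).choose (i + j + 2 * l) := by
  calc _ ≤ ∑ _k ∈ range (l + 1), (2 * n).choose (i + j + 2 * l) := by
        rw [mul_sum]
        refine sum_le_sum fun k hk => ?_
        have hkl := mem_range.1 hk
        calc _ ≤ n.choose (i + k) * n.choose (j + k) := choose_mul_choose_mul_choose_le n i j k
          _ ≤ (n + n).choose (i + k + (j + k)) := choose_mul_choose_le_add_choose n n _ _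
          _ ≤ (2 * n).choose (i + j + 2 * l) := by
            rw [← two_mul]; exact choose_le_choose_of_le_half (by omega) (by omega)
    _ = _ := by simp

theorem choose_mul_choose_mul_sum_choose_le_sq (m j l r : ℕ) (h : j + l ≤ r) :
    m.choose j * (m - j).choose j * ∑ k ∈ range (l + 1), (m - j - j).choose k ≤
      (∑ k ∈ range (r + 1), m.choose k) ^ 2 := by
  set T := ∑ k ∈ range (r + 1), m.choose k
  have hT : ∑ k ∈ range (l + 1), m.choose (j + k) ≤ T := by
    rw [← Nat.add_sub_cancel_left (n := j) (m := l + 1), ← sum_Ico_eq_sum_range]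
    exact sum_le_sum_of_subset fun p hp => by simp at hp ⊢; omega
  calc _ ≤ ∑ k ∈ range (l + 1), m.choose (j + k) * T := by
        rw [mul_sum]
        refine sum_le_sum fun k hk => ?_
        calc _ ≤ m.choose (j + k) * m.choose (j + k) := choose_mul_choose_mul_choose_le m j j k
          _ ≤ m.choose (j + k) * T := by
            gcongr
            exact single_le_sum (f := m.choose) (fun _ _ => Nat.zero_le _)
              (mem_range.2 (by simp at hk; omega))
    _ ≤ T ^ 2 := by rw [← sum_mul, sq]; gcongr

open Real in
theorem choose_le_exp_binEntropy (N k : ℕ) :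
    (N.choose k : ℝ) ≤ exp (N * binEntropy (k / N)) := by
  rcases eq_zero_or_pos k with rfl | hk0
  · simp
  obtain hNk | rfl | hkN := lt_trichotomy N k
  · simp [choose_eq_zero_of_lt hNk, exp_nonneg]
  · simp [hk0.ne']
  set p : ℝ := k / N
  have hN : (0 : ℝ) < N := by exact_mod_cast hk0.trans hkN
  have hp0 : 0 < p := by positivity
  have hq0 : 0 < 1 - p := sub_pos.2 ((div_lt_one hN).2 (by exact_mod_cast hkN))
  have hmass : (N.choose k : ℝ) * (p ^ k * (1 - p) ^ (N - k)) ≤ 1 := by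
    have hsum : ∑ i ∈ range (N + 1), p ^ i * (1 - p) ^ (N - i) * (N.choose i : ℝ) = 1 := by
      rw [← add_pow, add_sub_cancel, one_pow]
    calc _ = p ^ k * (1 - p) ^ (N - k) * (N.choose k : ℝ) := mul_comm _ _
      _ ≤ _ := single_le_sum (f := fun i => p ^ i * (1 - p) ^ (N - i) * (N.choose i : ℝ))
          (fun i _ => by positivity) (mem_range.2 (by omega))
      _ = 1 := hsum
  have hexp : exp (N * binEntropy p) = (p ^ k * (1 - p) ^ (N - k))⁻¹ := by
    have hk : (N : ℝ) * p = k := by simp only [p]; field_simp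
    have hNk : (N : ℝ) * (1 - p) = (N - k : ℕ) := by
      push_cast [hkN.le]; rw [mul_sub, hk, mul_one]
    rw [binEntropy, mul_add, ← mul_assoc, ← mul_assoc, hk, hNk, exp_add, exp_nat_mul,
      exp_nat_mul, exp_log (by positivity), exp_log (by positivity), inv_pow, inv_pow, mul_inv]
  rw [hexp, ← one_div, le_div_iff₀ (by positivity)]
  exact hmass

theorem le_mul_of_mul_self_le_add {x r κ T : ℕ} (hr : r < κ) (hT : 0 < T)
    (h : x * x ≤ x + r * (κ * T ^ 2)) : x ≤ κ * T := by
  by_contra! hx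
  have : x * (κ * T) ≤ r * T * (κ * T) := by nlinarith
  have : x ≤ r * T := Nat.le_of_mul_le_mul_right this (Nat.mul_pos (by omega) hT)
  nlinarith

end Nat

section SetFamily

variable {α : Type*} [DecidableEq α]

theorem card_le_choose_mul_choose {M : Finset α} {P : Finset (Finset α × Finset α)} {i j : ℕ}
    (hP : ∀ p ∈ P, p.1 ∈ M.powersetCard i ∧ p.2 ∈ (M \ p.1).powersetCard j) :
    #P ≤ (#M).choose i * (#M - i).choose j := by
  rw [mul_comm, ← card_powersetCard]
  refine card_le_mul_card_image_of_maps_to (fun p hp => (hP p hp).1) _ fun X hX => ?_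
  calc #{p ∈ P | p.1 = X} ≤ #((M \ X).powersetCard j) := by
        refine card_le_card_of_injOn Prod.snd (fun p hp => ?_) fun p hp q hq h => ?_
        · obtain ⟨hpP, rfl⟩ := mem_filter.1 hp
          exact (hP p hpP).2
        · exact Prod.ext ((mem_filter.1 hp).2.trans (mem_filter.1 hq).2.symm) h
    _ = (#M - i).choose j := by
        rw [card_powersetCard, card_sdiff_of_subset (mem_powersetCard.1 hX).1,
          (mem_powersetCard.1 hX).2]

theorem sum_le_sum_choose_mul_choose {ι : Type*} {M : Finset α}
    {Q : Finset (Finset α × Finset α)} {f : Finset α × Finset α → ℕ} {s : Finset ι}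
    {i j w : ι → ℕ}
    (hQ : ∀ q ∈ Q, q.1 ⊆ M ∧ q.2 ⊆ M \ q.1 ∧
      ∃ c ∈ s, #q.1 = i c ∧ #q.2 = j c ∧ f q ≤ w c) :
    ∑ q ∈ Q, f q ≤ ∑ c ∈ s, (#M).choose (i c) * (#M - i c).choose (j c) * w c := by
  calc ∑ q ∈ Q, f q
        ≤ ∑ q ∈ Q, ∑ c ∈ s, if #q.1 = i c ∧ #q.2 = j c then w c else 0 := by
        refine sum_le_sum fun q hq => ?_
        obtain ⟨-, -, c, hc, hi, hj, hf⟩ := hQ q hq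
        refine hf.trans ?_
        convert single_le_sum (f := fun c => if #q.1 = i c ∧ #q.2 = j c then w c else 0)
          (fun _ _ => Nat.zero_le _) hc
        simp [hi, hj]
    _ = ∑ c ∈ s, #{q ∈ Q | #q.1 = i c ∧ #q.2 = j c} * w c := by
        rw [sum_comm]
        simp [sum_ite]
    _ ≤ _ := by
        gcongr with c
        refine card_le_choose_mul_choose fun q hq => ?_
        obtain ⟨hqQ, hi, hj⟩ := mem_filter.1 hq
        obtain ⟨h1, h2, -⟩ := hQ q hqQ
        exact ⟨mem_powersetCard.2 ⟨h1, hi⟩, mem_powersetCard.2 ⟨h2, hj⟩⟩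

def diffPairs (F G : Finset (Finset α)) : Finset (Finset α × Finset α) :=
  (F ×ˢ G).image fun p => (p.1 \ p.2, p.2 \ p.1)

/-- The possible intersections `A ∩ B` of pairs `(A, B) ∈ F × G` with `A \ B = X`, `B \ A = Y`. -/
def pairLink (M : Finset α) (F G : Finset (Finset α)) (X Y : Finset α) : Finset (Finset α) :=
  {J ∈ ((M \ X) \ Y).powerset | X ∪ J ∈ F ∧ Y ∪ J ∈ G}

variable {M : Finset α} {F G : Finset (Finset α)}

theorem card_mul_card_le_sum_card_pairLink (hF : ∀ A ∈ F, A ⊆ M) :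
    #F * #G ≤ ∑ q ∈ diffPairs F G, #(pairLink M F G q.1 q.2) := by
  rw [← card_product, card_eq_sum_card_image (fun p => (p.1 \ p.2, p.2 \ p.1)) (F ×ˢ G)]
  refine sum_le_sum fun q _ => card_le_card_of_injOn (fun p => p.1 ∩ p.2) ?_ ?_
  · intro p hp
    obtain ⟨hpFG, rfl⟩ := mem_filter.1 hp
    obtain ⟨hA, hB⟩ := mem_product.1 hpFG
    have hAM := hF _ hA
    simp only [mem_coe, pairLink, mem_filter, mem_powerset]
    refine ⟨fun x hx => ?_, by rwa [sdiff_union_inter], by rwa [inter_comm, sdiff_union_inter]⟩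
    simp only [mem_inter] at hx
    simp [hAM hx.1, hx.1, hx.2]
  · intro p hp p' hp' h
    obtain ⟨-, hq⟩ := mem_filter.1 hp
    obtain ⟨-, hq'⟩ := mem_filter.1 hp'
    rw [← hq'] at hq
    simp only [Prod.mk.injEq] at hq h
    ext1
    · rw [← sdiff_union_inter p.1 p.2, ← sdiff_union_inter p'.1 p'.2, hq.1, h]
    · rw [← sdiff_union_inter p.2 p.1, ← sdiff_union_inter p'.2 p'.1, hq.2, inter_comm, h,
        inter_comm]

theorem pairLink_subset_powersetCard {a : ℕ} {X Y : Finset α} (hF : ∀ A ∈ F, #A = a) :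
    pairLink M F G X Y ⊆ ((M \ X) \ Y).powersetCard (a - #X) := by
  intro J hJ
  simp only [pairLink, mem_filter, mem_powerset] at hJ
  have hXJ : Disjoint X J := disjoint_of_subset_right (hJ.1.trans sdiff_subset) disjoint_sdiff
  have := hF _ hJ.2.1
  rw [card_union_of_disjoint hXJ] at this
  exact mem_powersetCard.2 ⟨hJ.1, by omega⟩

theorem le_card_inter_of_mem_pairLink {t : ℕ} {X Y J J' : Finset α} (hXY : Disjoint X Y)
    (hFG : ∀ A ∈ F, ∀ B ∈ G, t ≤ #(A ∩ B))
    (hJ : J ∈ pairLink M F G X Y) (hJ' : J' ∈ pairLink M F G X Y) :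
    t ≤ #(J ∩ J') := by
  simp only [pairLink, mem_filter, mem_powerset] at hJ hJ'
  refine (hFG _ hJ.2.1 _ hJ'.2.2).trans (card_le_card fun x hx => ?_)
  have h1 := @hJ.1 x
  have h2 := @hJ'.1 x
  have h3 : x ∈ X → x ∉ Y := fun h => disjoint_left.1 hXY h
  simp only [mem_inter, mem_union, mem_sdiff] at hx h1 h2 h3 ⊢
  tauto

theorem exists_card_eq_of_mem_diffPairs {a b t : ℕ} {q : Finset α × Finset α}
    (hF : F ⊆ M.powersetCard a) (hG : G ⊆ M.powersetCard b)
    (hFG : ∀ A ∈ F, ∀ B ∈ G, t ≤ #(A ∩ B)) (hq : q ∈ diffPairs F G) :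
    q.1 ⊆ M ∧ q.2 ⊆ M \ q.1 ∧ ∃ c ∈ Icc t (min a b), #q.1 = a - c ∧ #q.2 = b - c := by
  obtain ⟨⟨A, B⟩, hAB, rfl⟩ := mem_image.1 hq
  obtain ⟨hA, hB⟩ := mem_product.1 hAB
  obtain ⟨hAM, rfl⟩ := mem_powersetCard.1 (hF hA)
  obtain ⟨hBM, rfl⟩ := mem_powersetCard.1 (hG hB)
  refine ⟨sdiff_subset.trans hAM, fun x hx => ?_, #(A ∩ B), ?_, ?_, ?_⟩
  · simp only [mem_sdiff] at hx ⊢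
    exact ⟨hBM hx.1, fun h => hx.2 h.1⟩
  · simp only [mem_Icc, le_min_iff]
    exact ⟨hFG A hA B hB, card_le_card inter_subset_left, card_le_card inter_subset_right⟩
  · rw [← card_sdiff_add_card_inter A B, Nat.add_sub_cancel]
  · rw [← card_sdiff_add_card_inter B A, inter_comm, Nat.add_sub_cancel]

/-- The fibre of `H × H` over `(∅, ∅)` is the diagonal and, by induction, the other fibres add up
to at most `(c - t) κ T²` (`T` the ball volume); `|H|² ≤ |H| + (c - t) κ T²` forces `|H| ≤ κ T`. -/
theorem card_le_mul_sum_choose_of_intersecting {t c κ : ℕ} {H : Finset (Finset α)}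
    (hH : H ⊆ M.powersetCard c) (hI : ∀ A ∈ H, ∀ B ∈ H, t ≤ #(A ∩ B))
    (hκ : c - t < κ) :
    #H ≤ κ * ∑ k ∈ range (c - t + 1), (#M).choose k := by
  induction c using Nat.strong_induction_on generalizing M H with
  | _ c ih =>
  set T := ∑ k ∈ range (c - t + 1), (#M).choose k
  have hT : 0 < T := sum_pos' (fun _ _ => Nat.zero_le _) ⟨0, by simp⟩
  have hdiag : #(pairLink M H H ∅ ∅) ≤ #H :=
    card_le_card fun J hJ => by simpa [pairLink] using (mem_filter.1 hJ).2.1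
  have hoff : ∑ q ∈ (diffPairs H H).erase (∅, ∅), #(pairLink M H H q.1 q.2) ≤
      (c - t) * (κ * T ^ 2) := by
    calc _ ≤ ∑ d ∈ Ico t c, (#M).choose (c - d) * (#M - (c - d)).choose (c - d) *
            (κ * ∑ k ∈ range (d - t + 1), (#M - (c - d) - (c - d)).choose k) := by
          refine sum_le_sum_choose_mul_choose fun q hq => ?_
          obtain ⟨hq1, hq2, d, hd, h1, h2⟩ :=
            exists_card_eq_of_mem_diffPairs hH hH hI (mem_of_mem_erase hq)
          rw [min_self, mem_Icc] at hd
          have hdc : d < c := by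
            by_contra! h
            have h0 : c - d = 0 := by omega
            exact ne_of_mem_erase hq
              (Prod.ext (card_eq_zero.1 (h1.trans h0)) (card_eq_zero.1 (h2.trans h0)))
          refine ⟨hq1, hq2, d, mem_Ico.2 ⟨hd.1, hdc⟩, h1, h2, ?_⟩
          have hlink : pairLink M H H q.1 q.2 ⊆ ((M \ q.1) \ q.2).powersetCard d := by
            convert pairLink_subset_powersetCard (G := H) (M := M) (X := q.1) (Y := q.2)
              fun A hA => (mem_powersetCard.1 (hH hA)).2 using 2
            omega
          have := ih d hdc hlink
            (fun J hJ J' hJ' => le_card_inter_of_mem_pairLink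
              (disjoint_of_subset_right hq2 disjoint_sdiff) hI hJ hJ') (by omega)
          rwa [card_sdiff_of_subset hq2, card_sdiff_of_subset hq1, h1, h2] at this
      _ ≤ ∑ d ∈ Ico t c, κ * T ^ 2 := by
          refine sum_le_sum fun d hd => ?_
          rw [mul_left_comm]
          exact Nat.mul_le_mul_left κ
            (Nat.choose_mul_choose_mul_sum_choose_le_sq _ _ _ _ (by simp at hd; omega))
      _ = (c - t) * (κ * T ^ 2) := by simp
  refine Nat.le_mul_of_mul_self_le_add hκ hT ?_
  calc #H * #H ≤ ∑ q ∈ diffPairs H H, #(pairLink M H H q.1 q.2) :=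
        card_mul_card_le_sum_card_pairLink fun A hA => (mem_powersetCard.1 (hH hA)).1
    _ ≤ ∑ q ∈ insert (∅, ∅) ((diffPairs H H).erase (∅, ∅)),
          #(pairLink M H H q.1 q.2) :=
        sum_le_sum_of_subset (insert_erase_subset _ _)
    _ ≤ #H + (c - t) * (κ * T ^ 2) := by
        rw [sum_insert (notMem_erase _ _)]
        exact add_le_add hdiag hoff

/-- One factor `κ = min a b + 1 - t` each for the Kleitman bound, the admissible intersection sizes
`c`, and the summands `k ≤ c - t`. -/
theorem card_mul_card_le_of_crossIntersecting {a b t : ℕ}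
    (hF : F ⊆ M.powersetCard a) (hG : G ⊆ M.powersetCard b)
    (hFG : ∀ A ∈ F, ∀ B ∈ G, t ≤ #(A ∩ B)) (hab : a + b ≤ #M + 2 * t) :
    #F * #G ≤ (min a b + 1 - t) ^ 3 * (2 * #M).choose (a + b - 2 * t) := by
  set κ := min a b + 1 - t
  set n := #M
  calc #F * #G ≤ ∑ q ∈ diffPairs F G, #(pairLink M F G q.1 q.2) :=
        card_mul_card_le_sum_card_pairLink fun A hA => (mem_powersetCard.1 (hF hA)).1
    _ ≤ ∑ c ∈ Icc t (min a b), n.choose (a - c) * (n - (a - c)).choose (b - c) *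
          (κ * ∑ k ∈ range (c - t + 1), (n - (a - c) - (b - c)).choose k) := by
        refine sum_le_sum_choose_mul_choose fun q hq => ?_
        obtain ⟨hq1, hq2, c, hc, h1, h2⟩ := exists_card_eq_of_mem_diffPairs hF hG hFG hq
        refine ⟨hq1, hq2, c, hc, h1, h2, ?_⟩
        rw [mem_Icc, le_min_iff] at hc
        have hlink : pairLink M F G q.1 q.2 ⊆ ((M \ q.1) \ q.2).powersetCard c := by
          convert pairLink_subset_powersetCard fun A hA => (mem_powersetCard.1 (hF hA)).2 using 2
          omega
        have := card_le_mul_sum_choose_of_intersecting hlink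
          (fun J hJ J' hJ' => le_card_inter_of_mem_pairLink
            (disjoint_of_subset_right hq2 disjoint_sdiff) hFG hJ hJ') (show c - t < κ by omega)
        rwa [card_sdiff_of_subset hq2, card_sdiff_of_subset hq1, h1, h2] at this
    _ ≤ ∑ c ∈ Icc t (min a b), κ * (κ * (2 * n).choose (a + b - 2 * t)) := by
        refine sum_le_sum fun c hc => ?_
        rw [mem_Icc, le_min_iff] at hc
        rw [mul_left_comm]
        refine Nat.mul_le_mul_left κ
          ((Nat.choose_mul_choose_mul_sum_choose_le _ _ _ _ (by omega)).trans ?_)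
        rw [show a - c + (b - c) + 2 * (c - t) = a + b - 2 * t by omega]
        exact Nat.mul_le_mul_right _ (by omega)
    _ = κ ^ 3 * (2 * n).choose (a + b - 2 * t) := by simp [κ]; ring

end SetFamily

theorem UniformOn.subset_powersetCard {n m : ℕ} {F : Finset (Finset ℕ)} (hF : UniformOn n m F) :
    F ⊆ (gs n).powersetCard m :=
  fun A hA => mem_powersetCard.2 (hF A hA)

theorem card_gs_s7 (n : ℕ) : #(gs n) = n := by simp [gs]

theorem nProd_le_pow_mul_choose {n a b t : ℕ} (h : a + b ≤ n + 2 * t) :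
    NProd n a b t ≤ (min a b + 1 - t) ^ 3 * (2 * n).choose (a + b - 2 * t) := by
  refine csSup_le ⟨0, ∅, ∅, by simp [UniformOn, CrossInt]⟩ ?_
  rintro _ ⟨F, G, hF, hG, hFG, rfl⟩
  simpa [card_gs_s7] using card_mul_card_le_of_crossIntersecting hF.subset_powersetCard
    hG.subset_powersetCard hFG (by rwa [card_gs_s7])

theorem nprod_entropy_upper_bound_general (n a b t : ℕ) (habt : a + b < n + t) :
    (NProd n a b t : ℝ) ≤
      (n : ℝ) ^ 3 *
        Real.exp (2 * Real.binEntropy (((a : ℝ) + b - 2 * t) / (2 * n)) * n) := by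
  have hN := nProd_le_pow_mul_choose (n := n) (a := a) (b := b) (t := t) (by omega)
  rcases lt_or_ge (min a b) t with hmin | hmin
  · rw [show min a b + 1 - t = 0 by omega, zero_pow three_ne_zero, zero_mul, Nat.le_zero] at hN
    rw [hN, Nat.cast_zero]
    positivity
  have hκ : ((min a b + 1 - t : ℕ) : ℝ) ≤ n := by
    exact_mod_cast (by omega : min a b + 1 - t ≤ n)
  have hentropy : ((2 * n).choose (a + b - 2 * t) : ℝ) ≤
      Real.exp (2 * Real.binEntropy (((a : ℝ) + b - 2 * t) / (2 * n)) * n) := by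
    convert Nat.choose_le_exp_binEntropy (2 * n) (a + b - 2 * t) using 2
    push_cast [show 2 * t ≤ a + b by omega]
    ring
  calc (NProd n a b t : ℝ)
        ≤ ((min a b + 1 - t) ^ 3 * (2 * n).choose (a + b - 2 * t) : ℕ) := by exact_mod_cast hN
    _ ≤ _ := by
        rw [Nat.cast_mul, Nat.cast_pow]
        gcongr

/-- Proposition, upper bound (a). -/
theorem nprod_entropy_upper_bound (n a b t : ℕ) (hn : 0 < n) (ha : 0 < a) (hb : 0 < b)
    (ht : 0 < t) (han : a ≤ n) (hbn : b ≤ n) (habt : a + b < n + t) :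
    (NProd n a b t : ℝ) ≤
      (n : ℝ) ^ 3 *
        Real.exp (2 * Real.binEntropy (((a : ℝ) + b - 2 * t) / (2 * n)) * n) :=
  nprod_entropy_upper_bound_general n a b t habt
end

section
/- Let n, a, b, t be positive integers with t ≤ a, t ≤ b and n > a + b − t, and let F be an a-element subset of [n] and G a b-element subset of [n]. Then the following two conditions are equivalent: (a) there exists s ∈ [n] such that |F ∩ [s]| + |G ∩ [s]| ≥ s + t; (b) there exists i ∈ {1, …, a − t + 1} such that the i-th smallest element of [n] \ G is strictly greater than the (t + i − 1)-th smallest element of F. -/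
open Finset

/-- `mth X i` is the `i`-th smallest element of `X` (1-indexed; junk value `0`
if `i = 0` or `i > |X|`). -/
def mth (X : Finset ℕ) (i : ℕ) : ℕ := (X.sort (· ≤ ·)).getD (i - 1) 0

lemma mth_eq (X : Finset ℕ) {i : ℕ} (h1 : 1 ≤ i) (h2 : i ≤ X.card) :
    mth X i = X.orderEmbOfFin rfl ⟨i-1, by omega⟩ := by
  rw [mth, Finset.orderEmbOfFin_apply]
  simp only [Fin.getElem_fin]
  exact List.getD_eq_getElem _ _ (by rw [Finset.length_sort]; omega)

lemma mth_mem (X : Finset ℕ) {i : ℕ} (h1 : 1 ≤ i) (h2 : i ≤ X.card) : mth X i ∈ X := by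
  rw [mth_eq X h1 h2]; exact Finset.orderEmbOfFin_mem _ _ _

lemma le_card_filter (X : Finset ℕ) {i s : ℕ} (h1 : 1 ≤ i) (h2 : i ≤ X.card)
    (hs : mth X i ≤ s) : i ≤ (X.filter (· ≤ s)).card := by
  classical
  set f := X.orderEmbOfFin rfl with hf
  have key : ∀ m ∈ Finset.range i,
      (fun m => if h : m < X.card then f ⟨m, h⟩ else 0) m ∈ X.filter (· ≤ s) := by
    intro m hm
    rw [Finset.mem_range] at hm
    have hmc : m < X.card := by omega
    simp only [dif_pos hmc, Finset.mem_filter]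
    refine ⟨Finset.orderEmbOfFin_mem _ _ _, ?_⟩
    calc (f ⟨m, hmc⟩ : ℕ) ≤ f ⟨i-1, by omega⟩ := f.monotone (by simp [Fin.le_def]; omega)
      _ ≤ s := by rw [← mth_eq X h1 h2]; exact hs
  calc i = (Finset.range i).card := (Finset.card_range i).symm
    _ ≤ (X.filter (· ≤ s)).card := Finset.card_le_card_of_injOn _ key (by
      intro x hx y hy hxy
      rw [Finset.mem_coe, Finset.mem_range] at hx hy
      have hxc : x < X.card := by omega
      have hyc : y < X.card := by omega
      simp only [dif_pos hxc, dif_pos hyc] at hxy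
      exact congrArg Fin.val (f.injective hxy))

lemma card_filter_lt (X : Finset ℕ) {i s : ℕ} (h1 : 1 ≤ i) (h2 : i ≤ X.card)
    (hs : s < mth X i) : (X.filter (· ≤ s)).card < i := by
  classical
  set f := X.orderEmbOfFin rfl with hf
  have hsub : X.filter (· ≤ s) ⊆ (Finset.range (i-1)).image
      (fun m => if h : m < X.card then f ⟨m, h⟩ else 0) := by
    intro x hx
    rw [Finset.mem_filter] at hx
    obtain ⟨hxX, hxs⟩ := hx
    have : x ∈ Set.range f := by rw [Finset.range_orderEmbOfFin]; exact hxX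
    obtain ⟨j, hj⟩ := this
    have hji : (j : ℕ) < i - 1 := by
      by_contra hc
      push_neg at hc
      have : f ⟨i-1, by omega⟩ ≤ f j := f.monotone (by simp [Fin.le_def]; omega)
      rw [← mth_eq X h1 h2] at this
      omega
    refine Finset.mem_image.2 ⟨j, Finset.mem_range.2 hji, ?_⟩
    simp only [dif_pos j.isLt]
    rw [Fin.eta]; exact hj
  calc (X.filter (· ≤ s)).card ≤ _ := Finset.card_le_card hsub
    _ ≤ (Finset.range (i-1)).card := Finset.card_image_le
    _ < i := by rw [Finset.card_range]; omega

lemma inter_gs {n : ℕ} {X : Finset ℕ} (hX : X ⊆ gs n) (s : ℕ) :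
    X ∩ gs s = X.filter (· ≤ s) := by
  ext x
  simp only [gs, Finset.mem_inter, Finset.mem_Icc, Finset.mem_filter]
  constructor
  · rintro ⟨h1, _, h3⟩; exact ⟨h1, h3⟩
  · rintro ⟨h1, h2⟩
    have := hX h1
    rw [gs, Finset.mem_Icc] at this
    exact ⟨h1, this.1, h2⟩

/-- Lemma 3: the boundary condition reformulated. -/
theorem boundary_condition_iff (n a b t : ℕ) (hn : 0 < n) (ha : 0 < a) (hb : 0 < b)
    (ht : 0 < t) (hta : t ≤ a) (htb : t ≤ b) (hno : a + b < n + t)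
    (F G : Finset ℕ) (hFn : F ⊆ gs n) (hFa : F.card = a)
    (hGn : G ⊆ gs n) (hGb : G.card = b) :
    (∃ s ∈ gs n, s + t ≤ (F ∩ gs s).card + (G ∩ gs s).card) ↔
      (∃ i ∈ Finset.Icc 1 (a - t + 1), mth F (t + i - 1) < mth (gs n \ G) i) := by
  classical
  set H := gs n \ G with hH
  have hgsn : (gs n).card = n := by simp [gs]
  have hHn : H ⊆ gs n := Finset.sdiff_subset
  have hHcard : H.card = n - b := by rw [hH, Finset.card_sdiff_of_subset hGn, hGb, hgsn]
  have hbn : b ≤ n := by rw [← hGb, ← hgsn]; exact Finset.card_le_card hGn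
  have hpart : ∀ s, s ≤ n → (G ∩ gs s).card + (H ∩ gs s).card = s := by
    intro s hsn
    have h1 : H ∩ gs s = gs s \ (G ∩ gs s) := by
      ext x
      simp only [hH, gs, Finset.mem_inter, Finset.mem_sdiff, Finset.mem_Icc]
      constructor
      · rintro ⟨⟨_, hxG⟩, hx⟩; exact ⟨hx, fun h => hxG h.1⟩
      · rintro ⟨⟨hx1, hxs⟩, h⟩
        exact ⟨⟨⟨hx1, le_trans hxs hsn⟩, fun hg => h ⟨hg, hx1, hxs⟩⟩, hx1, hxs⟩
    rw [h1, Finset.card_sdiff_of_subset Finset.inter_subset_right]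
    have h2 : (G ∩ gs s).card ≤ (gs s).card := Finset.card_le_card Finset.inter_subset_right
    have h3 : (gs s).card = s := by simp [gs]
    omega
  constructor
  · rintro ⟨s, hsgs, hs⟩
    rw [gs, Finset.mem_Icc] at hsgs
    rw [inter_gs hFn, inter_gs hGn] at hs
    have hp := hpart s hsgs.2
    rw [inter_gs hGn, inter_gs hHn] at hp
    set j := (H.filter (· ≤ s)).card with hj
    set jF := (F.filter (· ≤ s)).card with hjF
    have hjFa : jF ≤ a := by
      rw [hjF, ← hFa]; exact Finset.card_le_card (Finset.filter_subset _ _)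
    have htj : t + j ≤ jF := by omega
    have htja : t + j ≤ a := le_trans htj hjFa
    refine ⟨j + 1, by rw [Finset.mem_Icc]; omega, ?_⟩
    have hmF : mth F (t + j) ≤ s := by
      by_contra hc
      push_neg at hc
      have := card_filter_lt F (by omega) (by omega : t + j ≤ F.card) hc
      omega
    have hmH : s < mth H (j + 1) := by
      by_contra hc
      push_neg at hc
      have := le_card_filter H (by omega) (by rw [hHcard]; omega : j + 1 ≤ H.card) hc
      omega
    have : t + (j + 1) - 1 = t + j := by omega
    rw [this]
    exact lt_of_le_of_lt hmF hmH
  · rintro ⟨i, hi, hlt⟩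
    rw [Finset.mem_Icc] at hi
    set s := mth F (t + i - 1) with hsdef
    have hti1 : 1 ≤ t + i - 1 := by omega
    have htia : t + i - 1 ≤ a := by omega
    have hsF : s ∈ F := mth_mem F hti1 (by omega : t + i - 1 ≤ F.card)
    have hsgs : s ∈ gs n := hFn hsF
    have hsn : s ≤ n := by rw [gs, Finset.mem_Icc] at hsgs; exact hsgs.2
    have h1 : t + i - 1 ≤ (F.filter (· ≤ s)).card :=
      le_card_filter F hti1 (by omega : t + i - 1 ≤ F.card) le_rfl
    have h2 : (H.filter (· ≤ s)).card < i :=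
      card_filter_lt H hi.1 (by rw [hHcard]; omega : i ≤ H.card) hlt
    refine ⟨s, hsgs, ?_⟩
    rw [inter_gs hFn, inter_gs hGn]
    have hp := hpart s hsn
    rw [inter_gs hGn, inter_gs hHn] at hp
    omega
end

section
/- Let σ, μ, η, α, β, τ be real numbers with 0 < σ < 1, 0 ≤ μ ≤ σ, 0 ≤ η ≤ σ, 0 ≤ α − μ ≤ 1 − σ, 0 ≤ β − η ≤ 1 − σ, τ ≥ 0, α + β < 1 + τ, and μ + η ≥ σ + τ. Then σ·(h(μ/σ) + h(η/σ)) + (1−σ)·(h((α−μ)/(1−σ)) + h((β−η)/(1−σ))) ≤ 2·h((α+β)/2 − τ), where h is the binary entropy function. -/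
/-- the entropy estimate used in the proof of upper bound (a). -/
theorem entropy_estimate (σ μ η α β τ : ℝ) (hσ0 : 0 < σ) (hσ1 : σ < 1)
    (hμ0 : 0 ≤ μ) (hμσ : μ ≤ σ) (hη0 : 0 ≤ η) (hησ : η ≤ σ)
    (hαμ0 : 0 ≤ α - μ) (hαμ1 : α - μ ≤ 1 - σ)
    (hβη0 : 0 ≤ β - η) (hβη1 : β - η ≤ 1 - σ)
    (hτ : 0 ≤ τ) (hαβτ : α + β < 1 + τ) (hμη : σ + τ ≤ μ + η) :
    σ * (Real.binEntropy (μ / σ) + Real.binEntropy (η / σ)) +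
      (1 - σ) * (Real.binEntropy ((α - μ) / (1 - σ)) +
        Real.binEntropy ((β - η) / (1 - σ)))
      ≤ 2 * Real.binEntropy ((α + β) / 2 - τ) := by
  have hs : (0:ℝ) < 1 - σ := by linarith
  have hcc := Real.strictConcave_binEntropy.concaveOn
  -- reflect the σ-terms
  have hrμ : Real.binEntropy (μ / σ) = Real.binEntropy ((σ - μ) / σ) := by
    rw [← Real.binEntropy_one_sub (μ / σ)]
    congr 1
    field_simp
  have hrη : Real.binEntropy (η / σ) = Real.binEntropy ((σ - η) / σ) := by
    rw [← Real.binEntropy_one_sub (η / σ)]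
    congr 1
    field_simp
  -- two-point Jensen
  have jensen : ∀ x y : ℝ, 0 ≤ x → x ≤ σ → 0 ≤ y → y ≤ 1 - σ →
      σ * Real.binEntropy (x / σ) + (1 - σ) * Real.binEntropy (y / (1 - σ))
        ≤ Real.binEntropy (x + y) := by
    intro x y hx0 hxσ hy0 hys
    have hmem1 : x / σ ∈ Set.Icc (0:ℝ) 1 := by
      constructor
      · positivity
      · rw [div_le_one hσ0]; exact hxσ.trans (by linarith)
    have hmem2 : y / (1 - σ) ∈ Set.Icc (0:ℝ) 1 := by
      constructor
      · positivity
      · rw [div_le_one hs]; linarith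
    have := hcc.2 hmem1 hmem2 hσ0.le hs.le (by ring)
    simpa [smul_eq_mul, mul_div_cancel₀, hσ0.ne', hs.ne'] using this
  have h1 := jensen (σ - μ) (α - μ) (by linarith) (by linarith) hαμ0 hαμ1
  have h2 := jensen (σ - η) (β - η) (by linarith) (by linarith) hβη0 hβη1
  -- combine the two with midpoint concavity
  set A := σ - μ + (α - μ) with hA
  set B := σ - η + (β - η) with hB
  have hA0 : 0 ≤ A := by simp [hA]; linarith
  have hA1 : A ≤ 1 := by simp [hA]; linarith
  have hB0 : 0 ≤ B := by simp [hB]; linarith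
  have hB1 : B ≤ 1 := by simp [hB]; linarith
  have hmid := hcc.2 (Set.mem_Icc.2 ⟨hA0, hA1⟩) (Set.mem_Icc.2 ⟨hB0, hB1⟩)
    (by norm_num : (0:ℝ) ≤ 1/2) (by norm_num : (0:ℝ) ≤ 1/2) (by norm_num)
  simp only [smul_eq_mul] at hmid
  -- monotonicity step
  have hab2 : (1:ℝ)/2 * A + 1/2 * B ≤ (α + β) / 2 - τ := by
    simp [hA, hB]; linarith
  have hmono : Real.binEntropy (1/2 * A + 1/2 * B) ≤
      Real.binEntropy ((α + β) / 2 - τ) := by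
    apply (Real.binEntropy_strictMonoOn.monotoneOn)
    · constructor
      · positivity
      · rw [show (2:ℝ)⁻¹ = 1/2 by norm_num]; linarith [hab2, hαβτ, hτ]
    · constructor
      · linarith [mul_nonneg (by norm_num : (0:ℝ) ≤ 1/2) hA0,
          mul_nonneg (by norm_num : (0:ℝ) ≤ 1/2) hB0]
      · rw [show (2:ℝ)⁻¹ = 1/2 by norm_num]; linarith
    · exact hab2
  rw [hrμ, hrη]
  calc σ * (Real.binEntropy ((σ - μ) / σ) + Real.binEntropy ((σ - η) / σ)) +
      (1 - σ) * (Real.binEntropy ((α - μ) / (1 - σ)) +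
        Real.binEntropy ((β - η) / (1 - σ)))
      = (σ * Real.binEntropy ((σ - μ) / σ) +
          (1 - σ) * Real.binEntropy ((α - μ) / (1 - σ))) +
        (σ * Real.binEntropy ((σ - η) / σ) +
          (1 - σ) * Real.binEntropy ((β - η) / (1 - σ))) := by ring
    _ ≤ Real.binEntropy A + Real.binEntropy B := add_le_add h1 h2
    _ = 2 * (1/2 * Real.binEntropy A + 1/2 * Real.binEntropy B) := by ring
    _ ≤ 2 * Real.binEntropy (1/2 * A + 1/2 * B) := by linarith [hmid]
    _ ≤ 2 * Real.binEntropy ((α + β) / 2 - τ) := by linarith [hmono]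
end
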